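/- arXiv:2603.04693 — 5 statements merged into one kernel-verified Lean document; each statement's English description precedes it below -/
import Mathlib

section
/- For every n ≥ 1 and every regulated partition 𝒫 of ℝⁿ, every point of ℝⁿ is contained in at most 2ⁿ distinct members of 𝒫, and there exists a point x ∈ ℝⁿ contained in at least n+1 distinct members of 𝒫. Consequently, if 𝒫 is a γ-regulated partition of ℝⁿ then n+1 ≤ γ, and γ = 2ⁿ always suffices. -/
/-- An (full-dimensional) rectangle in `ι → ℝ`: a product of nondegenerate closed intervals. -/
def IsRect {ι : Type*} (R : Set (ι → ℝ)) : Prop :=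
  ∃ a b : ι → ℝ, (∀ i, a i < b i) ∧ R = Set.Icc a b

/-- `F` is a face of the rectangle `Q` with normal vector `e j`. -/
def IsFaceWithNormal {ι : Type*} (F Q : Set (ι → ℝ)) (j : ι) : Prop :=
  ∃ a b : ι → ℝ, (∀ i, a i < b i) ∧ Q = Set.Icc a b ∧
    (F = {y ∈ Q | y j = a j} ∨ F = {y ∈ Q | y j = b j})

/-- `F` is a face of the rectangle `Q`. -/
def IsFaceOf {ι : Type*} (F Q : Set (ι → ℝ)) : Prop :=
  ∃ j, IsFaceWithNormal F Q j

/-- `e j` is a boundary vector of `x` with respect to the collection `P`. -/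
def IsBoundaryVector {ι : Type*} (P : Set (Set (ι → ℝ))) (x : ι → ℝ) (j : ι) : Prop :=
  ∃ Q ∈ P, ∃ F, IsFaceWithNormal F Q j ∧ x ∈ F

/-- `ν_P(x)`: the number of members of `P` containing `x`. -/
noncomputable def nuP {ι : Type*} (P : Set (Set (ι → ℝ))) (x : ι → ℝ) : ℕ :=
  Set.ncard {Q | Q ∈ P ∧ x ∈ Q}

/-- `β_P(x)`: the number of boundary vectors of `x` with respect to `P`. -/
noncomputable def betaP {ι : Type*} (P : Set (Set (ι → ℝ))) (x : ι → ℝ) : ℕ :=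
  Set.ncard {j | IsBoundaryVector P x j}

/-- A locally regulated cover of `R`. -/
def IsLocRegCover {ι : Type*} (R : Set (ι → ℝ)) (P : Set (Set (ι → ℝ))) : Prop :=
  P.Finite ∧ (∀ Q ∈ P, IsRect Q) ∧ ⋃₀ P = R

/-- A locally regulated partition of `R`. -/
def IsLocRegPartition {ι : Type*} (R : Set (ι → ℝ)) (P : Set (Set (ι → ℝ))) : Prop :=
  IsLocRegCover R P ∧ ∀ Q₁ ∈ P, ∀ Q₂ ∈ P, Q₁ ≠ Q₂ → interior Q₁ ∩ interior Q₂ = ∅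

/-- The collection `P` is about `x` (inside `R`). -/
def IsAbout {ι : Type*} (R : Set (ι → ℝ)) (P : Set (Set (ι → ℝ))) (x : ι → ℝ) : Prop :=
  ∀ Q ∈ P, ∀ F, IsFaceOf F Q → x ∈ F ∨ ∃ G, IsFaceOf G R ∧ F ⊆ G

/-- A regulated partition of `ι → ℝ`. -/
def IsRegPartition {ι : Type*} (P : Set (Set (ι → ℝ))) : Prop :=
  (∃ (D : Set ℝ) (d : ℝ), 0 < d ∧ (∀ r₁ ∈ D, ∀ r₂ ∈ D, r₁ ≠ r₂ → d < |r₁ - r₂|) ∧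
    ∀ Q ∈ P, ∃ a b : ι → ℝ, (∀ i, a i ∈ D ∧ b i ∈ D ∧ a i < b i) ∧ Q = Set.Icc a b) ∧
  (∀ x : ι → ℝ, ∃ Q ∈ P, x ∈ Q) ∧
  (∀ Q₁ ∈ P, ∀ Q₂ ∈ P, Q₁ ≠ Q₂ → interior Q₁ ∩ interior Q₂ = ∅)

/-- `v` is the boundary incidence sequence of `x` with respect to the rectangle `Q`. -/
def IsBIS {ι : Type*} (Q : Set (ι → ℝ)) (x : ι → ℝ) (v : ι → ℤ) : Prop :=
  ∃ a b : ι → ℝ, (∀ i, a i < b i) ∧ Q = Set.Icc a b ∧ x ∈ Q ∧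
    ∀ j, v j = if x j = a j then 1 else if x j = b j then -1 else 0

/-!
Upper bound: if `x` lies in `Q₁ = [a₁, b₁]` and `Q₂ = [a₂, b₂]` and, for every `i`, `x` lies on the
upper face `y i = b₁ i` of `Q₁` exactly when it lies on that of `Q₂`, then in each coordinate the
intervals `[a₁ i, b₁ i]` and `[a₂ i, b₂ i]` overlap in a nondegenerate interval, so the interiors of
`Q₁` and `Q₂` meet and `Q₁ = Q₂`. Hence the rectangles through `x` are told apart by a subset of the
coordinates, and there are at most `2ⁿ` of them.

Lower bound: let `Q₀ = [a, b]` be any member of the partition. The points `pⱼ` obtained from the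
corner `a` by moving `d/4` down in coordinate `j` and `d/4` up in all others lie outside `Q₀`; a
member `Qⱼ` covering `pⱼ` has its vertices in the `d`-separated set `D`, so it must contain `a`
itself. If `Qᵢ = Qⱼ` with `i ≠ j`, then `Qᵢ` reaches strictly above `a` in every coordinate and
its interior meets that of `Q₀`. So `Q₀, Q₁, …, Qₙ` are `n + 1` distinct members containing `a`.
-/

open Set

section Rectangles

variable {ι : Type*}

lemma mem_interior_Icc_of_forall_lt [Finite ι] {a b q : ι → ℝ}
    (h : ∀ i, a i < q i ∧ q i < b i) : q ∈ interior (Icc a b) := by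
  rw [mem_interior_iff_mem_nhds, ← pi_univ_Icc]
  exact set_pi_mem_nhds finite_univ fun i _ => Icc_mem_nhds (h i).1 (h i).2

lemma interior_Icc_inter_interior_Icc_nonempty [Finite ι] {a₁ b₁ a₂ b₂ : ι → ℝ}
    (h : ∀ i, max (a₁ i) (a₂ i) < min (b₁ i) (b₂ i)) :
    (interior (Icc a₁ b₁) ∩ interior (Icc a₂ b₂)).Nonempty := by
  rw [← interior_inter, Icc_inter_Icc]
  refine ⟨fun i => (max (a₁ i) (a₂ i) + min (b₁ i) (b₂ i)) / 2,
    mem_interior_Icc_of_forall_lt fun i => ?_⟩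
  have := h i
  simp only [Pi.sup_apply, Pi.inf_apply]
  constructor <;> linarith

lemma forall_mem_Icc_le_iff {a b x : ι → ℝ} (hab : a ≤ b) (hx : x ∈ Icc a b) (i : ι) :
    (∀ y ∈ Icc a b, y i ≤ x i) ↔ x i = b i :=
  ⟨fun h => le_antisymm (hx.2 i) (h b ⟨hab, le_rfl⟩), fun h _ hy => h ▸ hy.2 i⟩

lemma max_lt_min_of_mem_Icc_of_eq_iff_eq {a₁ b₁ a₂ b₂ x : ℝ} (h₁ : a₁ < b₁) (h₂ : a₂ < b₂)
    (hx₁ : x ∈ Icc a₁ b₁) (hx₂ : x ∈ Icc a₂ b₂) (h : x = b₁ ↔ x = b₂) :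
    max a₁ a₂ < min b₁ b₂ := by
  obtain ⟨ha₁, hb₁⟩ := hx₁
  obtain ⟨ha₂, hb₂⟩ := hx₂
  rw [max_lt_iff, lt_min_iff, lt_min_iff]
  by_cases hb : x = b₁
  · have := h.1 hb
    subst hb
    exact ⟨⟨h₁, by linarith⟩, by linarith, h₂⟩
  · have := lt_of_le_of_ne hb₂ (mt h.2 hb)
    have := lt_of_le_of_ne hb₁ hb
    exact ⟨⟨by linarith, by linarith⟩, by linarith, by linarith⟩

variable {P : Set (Set (ι → ℝ))}

lemma eq_of_mem_of_forall_le_iff [Finite ι] (hP : P.PairwiseDisjoint interior)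
    {Q₁ Q₂ : Set (ι → ℝ)} (hQ₁ : Q₁ ∈ P) (hQ₂ : Q₂ ∈ P) (hR₁ : IsRect Q₁) (hR₂ : IsRect Q₂)
    {x : ι → ℝ} (hx₁ : x ∈ Q₁) (hx₂ : x ∈ Q₂)
    (h : ∀ i, (∀ y ∈ Q₁, y i ≤ x i) ↔ (∀ y ∈ Q₂, y i ≤ x i)) : Q₁ = Q₂ := by
  obtain ⟨a₁, b₁, hab₁, rfl⟩ := hR₁
  obtain ⟨a₂, b₂, hab₂, rfl⟩ := hR₂
  have hupper : ∀ i, x i = b₁ i ↔ x i = b₂ i := fun i => by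
    rw [← forall_mem_Icc_le_iff (fun i => (hab₁ i).le) hx₁,
      ← forall_mem_Icc_le_iff (fun i => (hab₂ i).le) hx₂]
    exact h i
  obtain ⟨q, hq₁, hq₂⟩ := interior_Icc_inter_interior_Icc_nonempty fun i =>
    max_lt_min_of_mem_Icc_of_eq_iff_eq (hab₁ i) (hab₂ i) ⟨hx₁.1 i, hx₁.2 i⟩ ⟨hx₂.1 i, hx₂.2 i⟩
      (hupper i)
  exact hP.elim_set hQ₁ hQ₂ q hq₁ hq₂

theorem card_le_two_pow_of_pairwiseDisjoint_interior [Fintype ι] (hR : ∀ Q ∈ P, IsRect Q)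
    (hP : P.PairwiseDisjoint interior) (x : ι → ℝ) (T : Finset (Set (ι → ℝ)))
    (hT : ∀ Q ∈ T, Q ∈ P ∧ x ∈ Q) : T.card ≤ 2 ^ Fintype.card ι := by
  classical
  rw [← Fintype.card_finset, ← Finset.card_univ]
  refine Finset.card_le_card_of_injOn (fun Q => Finset.univ.filter fun i => ∀ y ∈ Q, y i ≤ x i)
    (fun _ _ => Finset.mem_univ _) fun Q₁ h₁ Q₂ h₂ he => ?_
  obtain ⟨hQ₁, hx₁⟩ := hT Q₁ h₁
  obtain ⟨hQ₂, hx₂⟩ := hT Q₂ h₂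
  exact eq_of_mem_of_forall_le_iff hP hQ₁ hQ₂ (hR Q₁ hQ₁) (hR Q₂ hQ₂) hx₁ hx₂ fun i => by
    simpa using Finset.ext_iff.1 he i

end Rectangles

section Separated

variable {D : Set ℝ} {d : ℝ}

lemma add_lt_of_lt_of_mem (hD : ∀ r₁ ∈ D, ∀ r₂ ∈ D, r₁ ≠ r₂ → d < |r₁ - r₂|) {r s : ℝ}
    (hr : r ∈ D) (hs : s ∈ D) (h : r < s) : r + d < s := by
  have := hD s hs r hr h.ne'
  rw [abs_of_pos (sub_pos.2 h)] at this
  linarith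

lemma mem_Icc_of_abs_sub_lt (hD : ∀ r₁ ∈ D, ∀ r₂ ∈ D, r₁ ≠ r₂ → d < |r₁ - r₂|) {ι : Type*}
    {A B a p : ι → ℝ} (hA : ∀ k, A k ∈ D) (hB : ∀ k, B k ∈ D) (ha : ∀ k, a k ∈ D)
    (hp : p ∈ Icc A B) (hpa : ∀ k, |p k - a k| < d) : a ∈ Icc A B := by
  refine ⟨fun k => ?_, fun k => ?_⟩ <;> by_contra! hlt <;> have := abs_lt.1 (hpa k)
  · have := add_lt_of_lt_of_mem hD (ha k) (hA k) hlt
    linarith [hp.1 k]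
  · have := add_lt_of_lt_of_mem hD (hB k) (ha k) hlt
    linarith [hp.2 k]

end Separated

section RegPartition

variable {ι : Type*} {P : Set (Set (ι → ℝ))}

lemma IsRegPartition.isRect (hP : IsRegPartition P) {Q : Set (ι → ℝ)} (hQ : Q ∈ P) : IsRect Q := by
  obtain ⟨_, _, -, -, hrep⟩ := hP.1
  obtain ⟨a, b, hab, rfl⟩ := hrep Q hQ
  exact ⟨a, b, fun i => (hab i).2.2, rfl⟩

lemma IsRegPartition.pairwiseDisjoint_interior (hP : IsRegPartition P) :
    P.PairwiseDisjoint interior := fun _ h₁ _ h₂ hne =>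
  disjoint_iff_inter_eq_empty.2 (hP.2.2 _ h₁ _ h₂ hne)

theorem IsRegPartition.exists_card_eq_card_add_one [Fintype ι] (hP : IsRegPartition P) :
    ∃ x : ι → ℝ, ∃ T : Finset (Set (ι → ℝ)),
      T.card = Fintype.card ι + 1 ∧ ∀ Q ∈ T, Q ∈ P ∧ x ∈ Q := by
  classical
  have hdisj := hP.pairwiseDisjoint_interior
  obtain ⟨⟨D, d, hd, hD, hrep⟩, hcov, -⟩ := hP
  obtain ⟨Q₀, hQ₀, -⟩ := hcov 0
  obtain ⟨a, b, hab, rfl⟩ := hrep Q₀ hQ₀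
  set p : ι → ι → ℝ := fun j => Function.update (fun k => a k + d / 4) j (a j - d / 4)
  have hp_self : ∀ j, p j j = a j - d / 4 := fun j => Function.update_self ..
  have hp_ne : ∀ j k, k ≠ j → p j k = a k + d / 4 := fun j k hk => Function.update_of_ne hk ..
  choose Q hQP hpQ using fun j => hcov (p j)
  choose A B hAB hQ using fun j => hrep (Q j) (hQP j)
  have ha : ∀ j, a ∈ Icc (A j) (B j) := fun j =>
    mem_Icc_of_abs_sub_lt hD (fun k => (hAB j k).1) (fun k => (hAB j k).2.1) (fun k => (hab k).1)
      (hQ j ▸ hpQ j) fun k => by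
        rcases eq_or_ne k j with rfl | hk
        · rw [hp_self, sub_sub_cancel_left, abs_neg, abs_of_pos (by positivity)]; linarith
        · rw [hp_ne j k hk, add_sub_cancel_left, abs_of_pos (by positivity)]; linarith
  have hlt : ∀ i j k, p j ∈ Q i → k ≠ j → a k < B i k := fun i j k hpi hk => by
    have := ((hQ i ▸ hpi).2 k)
    rw [hp_ne j k hk] at this
    linarith
  have hne : ∀ j, Q j ≠ Icc a b := fun j he => by
    have := (he ▸ hpQ j).1 j
    rw [hp_self] at this
    linarith
  have hinj : Function.Injective Q := fun i j hij => by
    by_contra hij'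
    apply hne i
    have hoverlap : ∀ k, max (A i k) (a k) < min (B i k) (b k) := fun k => by
      have hk : a k < B i k := by
        rcases eq_or_ne k i with rfl | hki
        · exact hlt k j k (hij ▸ hpQ j) hij'
        · exact hlt i i k (hpQ i) hki
      rw [max_eq_right ((ha i).1 k)]
      exact lt_min hk (hab k).2.2
    obtain ⟨q, hqi, hq₀⟩ := interior_Icc_inter_interior_Icc_nonempty hoverlap
    exact hdisj.elim_set (hQP i) hQ₀ q (hQ i ▸ hqi) hq₀
  refine ⟨a, insert (Icc a b) (Finset.univ.image Q), ?_, ?_⟩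
  · rw [Finset.card_insert_of_notMem (by simpa using hne),
      Finset.card_image_of_injective _ hinj, Finset.card_univ]
  · simp only [Finset.mem_insert, Finset.mem_image, Finset.mem_univ, true_and]
    rintro _ (rfl | ⟨j, rfl⟩)
    · exact ⟨hQ₀, le_rfl, fun i => (hab i).2.2.le⟩
    · exact ⟨hQP j, hQ j ▸ ha j⟩

end RegPartition

theorem stmt0_general (n : ℕ) (P : Set (Set (Fin n → ℝ))) (hP : IsRegPartition P) :
    (∀ x : Fin n → ℝ, ∀ T : Finset (Set (Fin n → ℝ)),
        (∀ Q ∈ T, Q ∈ P ∧ x ∈ Q) → T.card ≤ 2 ^ n) ∧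
    (∃ x : Fin n → ℝ, ∃ T : Finset (Set (Fin n → ℝ)),
        T.card = n + 1 ∧ ∀ Q ∈ T, Q ∈ P ∧ x ∈ Q) ∧
    (∀ γ : ℕ, 1 ≤ γ →
      (∀ x : Fin n → ℝ, ∀ T : Finset (Set (Fin n → ℝ)),
        (∀ Q ∈ T, Q ∈ P ∧ x ∈ Q) → T.card ≤ γ) → n + 1 ≤ γ) := by
  have hlower := hP.exists_card_eq_card_add_one
  rw [Fintype.card_fin] at hlower
  refine ⟨fun x T hT => ?_, hlower, fun γ _ hγ => ?_⟩
  · simpa using card_le_two_pow_of_pairwiseDisjoint_interior (fun _ => hP.isRect)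
      hP.pairwiseDisjoint_interior x T hT
  · obtain ⟨x, T, hcard, hT⟩ := hlower
    exact hcard ▸ hγ x T hT

/-- For every `n ≥ 1` and every regulated partition `P` of `ℝⁿ`, every point is
contained in at most `2ⁿ` members of `P`, there is a point contained in at least `n+1` members,
and consequently any `γ` for which `P` is `γ`-regulated satisfies `n+1 ≤ γ` (while `γ = 2ⁿ`
always suffices). -/
theorem stmt0 (n : ℕ) (hn : 1 ≤ n) (P : Set (Set (Fin n → ℝ))) (hP : IsRegPartition P) :
    (∀ x : Fin n → ℝ, ∀ T : Finset (Set (Fin n → ℝ)),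
        (∀ Q ∈ T, Q ∈ P ∧ x ∈ Q) → T.card ≤ 2 ^ n) ∧
    (∃ x : Fin n → ℝ, ∃ T : Finset (Set (Fin n → ℝ)),
        T.card = n + 1 ∧ ∀ Q ∈ T, Q ∈ P ∧ x ∈ Q) ∧
    (∀ γ : ℕ, 1 ≤ γ →
      (∀ x : Fin n → ℝ, ∀ T : Finset (Set (Fin n → ℝ)),
        (∀ Q ∈ T, Q ∈ P ∧ x ∈ Q) → T.card ≤ γ) → n + 1 ≤ γ) :=
  stmt0_general n P hP
end

section
/- Let R be an n-dimensional rectangle in ℝⁿ, let x ∈ Int(R), and let 𝒫 be a locally regulated cover of R about x that is separative (i.e., a principal matrix of x with respect to 𝒫 is separative). Then ν_𝒫(x) ≥ β_𝒫(x) + 1. -/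
/-- Separative matrices (entries viewed as integers in `{0, ±1}`), defined by recursion
on the number of columns, with rows indexed by an arbitrary type. -/
def Separative : (k : ℕ) → {ρ : Type} → (ρ → Fin k → ℤ) → Prop
  | 0, _, _ => True
  | 1, _, M => (∀ i, M i 0 = 0) ∨ (∃ i i', M i 0 * M i' 0 = -1)
  | (k+2), _, M => ∀ j : Fin (k + 2),
      Separative (k+1) (fun (p : {i // M i j ≠ -1}) (l : Fin (k+1)) => M p.1 (j.succAbove l)) ∧
      Separative (k+1) (fun (p : {i // M i j ≠ 1}) (l : Fin (k+1)) => M p.1 (j.succAbove l))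

/-- `M` is a principal matrix of `x` with respect to the collection `P`
(via some enumeration of `P` by `Fin m`). -/
def IsPrincipalMatrix {n m : ℕ} (P : Set (Set (Fin n → ℝ))) (x : Fin n → ℝ)
    (M : Fin m → Fin n → ℤ) : Prop :=
  ∃ e : Fin m → Set (Fin n → ℝ), Function.Injective e ∧ (∀ i, e i ∈ P) ∧
    (∀ Q ∈ P, ∃ i, e i = Q) ∧ ∀ i, IsBIS (e i) x (M i)

/-!
Every member of `P` contains `x`, so `ν_P(x)` is the number of rows of a principal matrix `M`
and `β_P(x)` the number of its nonzero columns. Separativity makes `M` sign balanced: among the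
rows whose signs off a column `j` never oppose a pattern `s ∈ {±1}ⁿ`, the sign `-s j` occurs in
column `j` as soon as `s j` does. Flipping signs this way, every real vector `c` that is nonzero
on some nonzero column has a row `i` with `∑ⱼ c j * M i j > 0`. Applying this to `c` and `-c`
shows that the nonzero columns of `M` and the all-ones vector are linearly independent in `ℝ^ν`.
-/

def SignBalanced {ρ κ : Type*} (M : ρ → κ → ℤ) : Prop :=
  ∀ s : κ → ℤ, (∀ l, s l = 1 ∨ s l = -1) → ∀ (j : κ) (i₀ : ρ),
    (∀ l ≠ j, M i₀ l ≠ -s l) → M i₀ j = s j →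
      ∃ i, (∀ l ≠ j, M i l ≠ -s l) ∧ M i j = -s j

theorem Separative.minor {k : ℕ} {ρ : Type} {M : ρ → Fin (k + 2) → ℤ}
    (h : Separative (k + 2) M) (j : Fin (k + 2)) {ε : ℤ} (hε : ε = 1 ∨ ε = -1) :
    Separative (k + 1) (fun (p : {i // M i j ≠ -ε}) l => M p.1 (j.succAbove l)) := by
  rcases hε with rfl | rfl
  exacts [(h j).1, (h j).2]

theorem Separative.signBalanced : ∀ {k : ℕ} {ρ : Type} {M : ρ → Fin k → ℤ},
    Separative k M → SignBalanced M
  | 0, _, _, _ => fun _ _ j => j.elim0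
  | 1, _, M, h => by
    intro s hs j i₀ _ hj
    obtain rfl : j = 0 := Subsingleton.elim _ _
    have hs₀ : s 0 ≠ 0 := by rcases hs 0 with h | h <;> simp [h]
    obtain ⟨i, i', hii'⟩ := (show (∀ i, M i 0 = 0) ∨ ∃ i i', M i 0 * M i' 0 = -1 from h)
      |>.resolve_left fun h0 => hs₀ (hj ▸ h0 i₀)
    have hboth : ∀ σ : ℤ, σ = 1 ∨ σ = -1 → ∃ i, M i 0 = σ := by
      rcases Int.eq_one_or_neg_one_of_mul_eq_neg_one hii' with h1 | h1 <;>
        rw [h1] at hii' <;> rintro σ (rfl | rfl)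
      exacts [⟨i, h1⟩, ⟨i', by linarith⟩, ⟨i', by linarith⟩, ⟨i, h1⟩]
    obtain ⟨i, hi⟩ := hboth (-s 0) (by rcases hs 0 with h | h <;> simp [h])
    exact ⟨i, fun l hl => absurd (Subsingleton.elim l 0) hl, hi⟩
  | k + 2, _, M, h => by
    intro s hs j i₀ hi₀ hj
    obtain ⟨j', hj'⟩ := exists_ne j
    obtain ⟨j, rfl⟩ := Fin.exists_succAbove_eq hj'.symm
    -- the rows not opposing `s` at `j'` form the minor `M_{j', s j'}`, which is separative
    obtain ⟨⟨i, hi⟩, hcompat, hflip⟩ := Separative.signBalanced (h.minor j' (hs j'))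
      (s ∘ j'.succAbove) (fun _ => hs _) j ⟨i₀, hi₀ j' hj'⟩
      (fun _ hl => hi₀ _ (Fin.succAbove_right_injective.ne hl)) hj
    refine ⟨i, fun l hl => ?_, hflip⟩
    rcases Fin.eq_self_or_eq_succAbove j' l with rfl | ⟨l, rfl⟩
    · exact hi
    · exact hcompat l (ne_of_apply_ne _ hl)

namespace SignBalanced

variable {ρ κ : Type*} {M : ρ → κ → ℤ}

theorem exists_fewer_conflicts [DecidableEq κ] (hM : SignBalanced M)
    (hE : ∀ i j, M i j = 0 ∨ M i j = 1 ∨ M i j = -1) {s : κ → ℤ}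
    (hs : ∀ l, s l = 1 ∨ s l = -1) (S : Finset κ) {i₀ : ρ} {l : κ} (hl : l ∈ S)
    (hconf : M i₀ l = -s l) :
    ∃ i, M i l ≠ 0 ∧ S.filter (fun j => M i j = -s j) ⊂ S.filter (fun j => M i₀ j = -s j) := by
  -- flipping `i₀` at `l` against its own signs `t` moves no other entry against `t`
  set t : κ → ℤ := fun m => if M i₀ m = 0 then s m else M i₀ m with ht_def
  have ht : ∀ m, t m = 1 ∨ t m = -1 := fun m => by
    rw [ht_def]; dsimp only; split_ifs with h
    · exact hs m
    · exact (hE i₀ m).resolve_left h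
  have hi₀t : ∀ m, M i₀ m ≠ -t m := fun m => by
    rw [ht_def]; dsimp only; split_ifs with h <;> rcases hs m with h' | h' <;> omega
  have htl : M i₀ l = t l := by
    rw [ht_def]; dsimp only; rw [if_neg (by rcases hs l with h | h <;> omega)]
  obtain ⟨i, hi, hil⟩ := hM t ht l i₀ (fun m _ => hi₀t m) htl
  refine ⟨i, by rcases hs l with h | h <;> omega,
    Finset.ssubset_of_subset_of_ssubset (fun j hj => ?_)
      (Finset.erase_ssubset (Finset.mem_filter.2 ⟨hl, hconf⟩))⟩
  simp only [Finset.mem_filter, Finset.mem_erase] at hj ⊢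
  have hjl : j ≠ l := by rintro rfl; rcases hs j with h | h <;> omega
  refine ⟨hjl, hj.1, ?_⟩
  have hij := hi j hjl
  rw [ht_def] at hij; dsimp only at hij
  split_ifs at hij with h <;> rcases hs j with h' | h' <;> rcases hE i₀ j with h'' | h'' | h'' <;>
    omega

theorem exists_compatible_row [DecidableEq κ] (hM : SignBalanced M)
    (hE : ∀ i j, M i j = 0 ∨ M i j = 1 ∨ M i j = -1) {s : κ → ℤ}
    (hs : ∀ l, s l = 1 ∨ s l = -1) (S : Finset κ) (h : ∃ i₀, ∃ j ∈ S, M i₀ j ≠ 0) :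
    ∃ i, (∀ j ∈ S, M i j ≠ -s j) ∧ ∃ j ∈ S, M i j ≠ 0 := by
  obtain ⟨i, ⟨j, hjS, hij⟩, hmin⟩ :=
    (InvImage.wf (fun i => S.filter (fun j => M i j = -s j)) wellFounded_lt).has_min
      {i | ∃ j ∈ S, M i j ≠ 0} h
  refine ⟨i, fun l hl hconf => ?_, j, hjS, hij⟩
  obtain ⟨i₁, hi₁, hlt⟩ := hM.exists_fewer_conflicts hE hs S hl hconf
  exact hmin i₁ ⟨l, hl, hi₁⟩ hlt

theorem exists_sum_pos [Fintype κ] [DecidableEq κ] (hM : SignBalanced M)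
    (hE : ∀ i j, M i j = 0 ∨ M i j = 1 ∨ M i j = -1) (c : κ → ℝ)
    (hc : ∃ j, c j ≠ 0 ∧ ∃ i, M i j ≠ 0) : ∃ i, 0 < ∑ j, c j * M i j := by
  set s : κ → ℤ := fun j => if 0 ≤ c j then 1 else -1 with hs_def
  have hs : ∀ j, s j = 1 ∨ s j = -1 := fun j => by
    rw [hs_def]; dsimp only; split_ifs <;> simp
  have hcs : ∀ j, c j ≠ 0 → 0 < c j * s j := fun j hj => by
    rw [hs_def]; dsimp only; split_ifs with h
    · simpa using lt_of_le_of_ne h hj.symm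
    · simpa using not_le.1 h
  obtain ⟨j₀, hcj₀, i₀, hi₀⟩ := hc
  obtain ⟨i, hcompat, j, hj, hij⟩ := hM.exists_compatible_row hE hs
    (Finset.univ.filter (c · ≠ 0)) ⟨i₀, j₀, by simpa using hcj₀, hi₀⟩
  have hentry : ∀ j, c j ≠ 0 → M i j = 0 ∨ M i j = s j := fun j hj => by
    have := hcompat j (by simpa using hj)
    rcases hE i j with h | h | h <;> rcases hs j with h' | h' <;> omega
  refine ⟨i, Finset.sum_pos' (fun j _ => ?_) ⟨j, Finset.mem_univ j, ?_⟩⟩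
  · by_cases hcj : c j = 0
    · simp [hcj]
    · rcases hentry j hcj with h | h <;> simp [h, (hcs j hcj).le]
  · have hcj : c j ≠ 0 := by simpa using hj
    rw [(hentry j hcj).resolve_left hij]
    exact hcs j hcj

theorem card_nonzero_columns_lt [Finite ρ] [Nonempty ρ] [Finite κ] (hM : SignBalanced M)
    (hE : ∀ i j, M i j = 0 ∨ M i j = 1 ∨ M i j = -1) :
    Nat.card {j // ∃ i, M i j ≠ 0} + 1 ≤ Nat.card ρ := by
  classical
  have := Fintype.ofFinite ρ
  have := Fintype.ofFinite κ
  let v : Option {j // ∃ i, M i j ≠ 0} → ρ → ℝ := fun o => o.elim 1 fun j i => M i j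
  have hv : LinearIndependent ℝ v := by
    rw [Fintype.linearIndependent_iff]
    intro g hg
    set c : κ → ℝ := fun j => if h : ∃ i, M i j ≠ 0 then g (some ⟨j, h⟩) else 0 with hc_def
    have hrow : ∀ i, g none + ∑ j, c j * M i j = 0 := fun i => by
      have := congrFun hg i
      simp only [Fintype.sum_option, Finset.sum_apply, Pi.smul_apply, v, Option.elim,
        Pi.one_apply, smul_eq_mul, mul_one, Pi.zero_apply] at this
      have hc_pos : ∀ j : {j // ∃ i, M i j ≠ 0}, c j = g (some j) := fun j => dif_pos j.2
      have hc_neg : ∀ j : {j // ¬∃ i, M i j ≠ 0}, c j = 0 := fun j => dif_neg j.2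
      rw [← Fintype.sum_subtype_add_sum_subtype (fun j => ∃ i, M i j ≠ 0)]
      simpa only [hc_pos, hc_neg, zero_mul, Finset.sum_const_zero, add_zero] using this
    have hc : c = 0 := by
      by_contra hne
      obtain ⟨j, hj⟩ := Function.ne_iff.1 hne
      have hjB : ∃ i, M i j ≠ 0 := by by_contra h; simp [hc_def, h] at hj
      obtain ⟨i, hi⟩ := hM.exists_sum_pos hE c ⟨j, hj, hjB⟩
      obtain ⟨i', hi'⟩ := hM.exists_sum_pos hE (-c) ⟨j, by simpa using hj, hjB⟩
      simp only [Pi.neg_apply, neg_mul, Finset.sum_neg_distrib, neg_pos] at hi'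
      linarith [hrow i, hrow i']
    rintro (_ | j)
    · simpa [hc] using hrow (Classical.arbitrary ρ)
    · simpa [hc_def, j.2] using congrFun hc j.1
  simpa [Finite.card_option, Nat.card_eq_fintype_card, Module.finrank_fintype_fun_eq_card]
    using hv.fintype_card_le_finrank

end SignBalanced

theorem IsBIS.entry_eq {ι : Type*} {Q : Set (ι → ℝ)} {x : ι → ℝ} {v : ι → ℤ}
    (h : IsBIS Q x v) (j : ι) : v j = 0 ∨ v j = 1 ∨ v j = -1 := by
  obtain ⟨a, b, -, -, -, hv⟩ := h
  rw [hv j]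
  split_ifs <;> simp

theorem IsBIS.ne_zero_iff {ι : Type*} {Q : Set (ι → ℝ)} {x : ι → ℝ} {v : ι → ℤ}
    (h : IsBIS Q x v) (j : ι) : v j ≠ 0 ↔ ∃ F, IsFaceWithNormal F Q j ∧ x ∈ F := by
  obtain ⟨a, b, hab, rfl, hx, hv⟩ := h
  rw [hv j]
  constructor
  · intro hne
    split_ifs at hne with ha hb
    · exact ⟨_, ⟨a, b, hab, rfl, Or.inl rfl⟩, hx, ha⟩
    · exact ⟨_, ⟨a, b, hab, rfl, Or.inr rfl⟩, hx, hb⟩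
    · exact absurd rfl hne
  · rintro ⟨F, ⟨a', b', -, hQ, hF⟩, hxF⟩
    obtain ⟨rfl, rfl⟩ := (Set.Icc_eq_Icc_iff fun i => (hab i).le).1 hQ
    rcases hF with rfl | rfl <;> obtain ⟨-, hxj⟩ := hxF
    · simp [hxj]
    · split_ifs <;> simp

namespace IsPrincipalMatrix

variable {n m : ℕ} {P : Set (Set (Fin n → ℝ))} {x : Fin n → ℝ} {M : Fin m → Fin n → ℤ}

theorem nuP_eq (h : IsPrincipalMatrix P x M) : nuP P x = m := by
  obtain ⟨e, he, hmem, hsurj, hbis⟩ := h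
  have hP : {Q | Q ∈ P ∧ x ∈ Q} = Set.range e := by
    ext Q
    constructor
    · exact fun hQ => hsurj Q hQ.1
    · rintro ⟨i, rfl⟩
      obtain ⟨a, b, -, -, hx, -⟩ := hbis i
      exact ⟨hmem i, hx⟩
  rw [nuP, hP, Set.ncard_range_of_injective he, Nat.card_fin]

theorem betaP_eq (h : IsPrincipalMatrix P x M) :
    betaP P x = Nat.card {j // ∃ i, M i j ≠ 0} := by
  obtain ⟨e, -, hmem, hsurj, hbis⟩ := h
  have hB : {j | IsBoundaryVector P x j} = {j | ∃ i, M i j ≠ 0} := by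
    ext j
    simp only [Set.mem_ofPred_eq, fun i => (hbis i).ne_zero_iff j]
    constructor
    · rintro ⟨Q, hQ, hF⟩
      obtain ⟨i, rfl⟩ := hsurj Q hQ
      exact ⟨i, hF⟩
    · rintro ⟨i, hF⟩
      exact ⟨e i, hmem i, hF⟩
  rw [betaP, hB, ← Nat.card_coe_set_eq]
  rfl

theorem entry_eq (h : IsPrincipalMatrix P x M) (i : Fin m) (j : Fin n) :
    M i j = 0 ∨ M i j = 1 ∨ M i j = -1 := by
  obtain ⟨e, -, -, -, hbis⟩ := h
  exact (hbis i).entry_eq j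

theorem nonempty_of_mem (h : IsPrincipalMatrix P x M) {Q : Set (Fin n → ℝ)} (hQ : Q ∈ P) :
    Nonempty (Fin m) := by
  obtain ⟨e, -, -, hsurj, -⟩ := h
  exact ⟨(hsurj Q hQ).choose⟩

end IsPrincipalMatrix

theorem stmt1_general (n : ℕ) (R : Set (Fin n → ℝ)) (x : Fin n → ℝ) (P : Set (Set (Fin n → ℝ)))
    (hx : x ∈ interior R)
    (hcov : IsLocRegCover R P)
    (hsep : ∃ (m : ℕ) (M : Fin m → Fin n → ℤ), IsPrincipalMatrix P x M ∧ Separative n M) :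
    betaP P x + 1 ≤ nuP P x := by
  obtain ⟨m, M, hM, hsepM⟩ := hsep
  obtain ⟨Q, hQ, -⟩ : x ∈ ⋃₀ P := hcov.2.2 ▸ interior_subset hx
  have := hM.nonempty_of_mem hQ
  rw [hM.nuP_eq, hM.betaP_eq]
  simpa using hsepM.signBalanced.card_nonzero_columns_lt hM.entry_eq

/-- if `P` is a locally regulated cover of `R` about `x ∈ Int R` which is separative
(i.e., a principal matrix of `x` with respect to `P` is separative), then `ν_P(x) ≥ β_P(x) + 1`. -/
theorem stmt1 (n : ℕ) (R : Set (Fin n → ℝ)) (x : Fin n → ℝ) (P : Set (Set (Fin n → ℝ)))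
    (hR : IsRect R) (hx : x ∈ interior R)
    (hcov : IsLocRegCover R P) (hab : IsAbout R P x)
    (hsep : ∃ (m : ℕ) (M : Fin m → Fin n → ℤ), IsPrincipalMatrix P x M ∧ Separative n M) :
    betaP P x + 1 ≤ nuP P x :=
  stmt1_general n R x P hx hcov hsep
end

section
/- Let R be an n-dimensional rectangle in ℝⁿ, let x ∈ Int(R), and let 𝒫 be a locally regulated partition of R about x. Then any principal matrix of x with respect to 𝒫 is separative. -/
/-! Since `𝒫` is about `x`, each of its members is the rectangle `R = [A, B]` cut at `x`: in
coordinate `j` it is `[x j, B j]`, `[A j, x j]` or `[A j, B j]` according as the `j`-th entry of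
its row is `1`, `-1` or `0`. Hence every open orthant at `x` lies in a member, so every sign vector
is conformed to by some row; and two rows conforming to a common sign vector give members with
overlapping interiors, hence coincide, so two distinct rows are separated by some column. Both
properties pass to `M_{j,+}` and `M_{j,-}`, and in one column they force separativity. -/

open Set Function

section SignVectors

variable {ι : Type*}

def IsSignVector (ε : ι → ℤ) : Prop :=
  ∀ j, ε j = 1 ∨ ε j = -1

def ConformsTo (v ε : ι → ℤ) : Prop :=
  ∀ j, v j = 0 ∨ v j = ε j

theorem exists_isSignVector_conformsTo {v w : ι → ℤ}
    (hv : ∀ j, v j = 0 ∨ v j = 1 ∨ v j = -1) (hw : ∀ j, w j = 0 ∨ w j = 1 ∨ w j = -1)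
    (hvw : ∀ j, v j * w j ≠ -1) :
    ∃ ε, IsSignVector ε ∧ ConformsTo v ε ∧ ConformsTo w ε := by
  classical
  refine ⟨fun j => if v j = -1 ∨ w j = -1 then -1 else 1, fun j => ?_, fun j => ?_, fun j => ?_⟩ <;>
    have := hvw j <;> rcases hv j with h | h | h <;> rcases hw j with h' | h' | h' <;>
    simp_all

end SignVectors

section SeparativeMatrices

variable {k : ℕ} {ρ : Type}

def RowsSeparated (M : ρ → Fin k → ℤ) : Prop :=
  ∀ i i', M i ≠ M i' → ∃ j, M i j * M i' j = -1

def CoversOrthants (M : ρ → Fin k → ℤ) : Prop :=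
  ∀ ε, IsSignVector ε → ∃ i, ConformsTo (M i) ε

/-- In the notation of `Separative`, `M_{j,+} = minor M j (-1)` and `M_{j,-} = minor M j 1`. -/
def minor (M : ρ → Fin (k + 1) → ℤ) (j : Fin (k + 1)) (s : ℤ) : {i // M i j ≠ s} → Fin k → ℤ :=
  fun p l => M p.1 (j.succAbove l)

variable {M : ρ → Fin (k + 1) → ℤ} {s : ℤ}

@[simp]
theorem minor_apply (j : Fin (k + 1)) (p : {i // M i j ≠ s}) (l : Fin k) :
    minor M j s p l = M p.1 (j.succAbove l) :=
  rfl

theorem RowsSeparated.minor (hM : RowsSeparated M) (j : Fin (k + 1)) (hs : s = 1 ∨ s = -1) :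
    RowsSeparated (minor M j s) := by
  intro p p' hpp'
  obtain ⟨j', hj'⟩ := hM p p' fun h => hpp' (funext fun l => congrFun h _)
  have hj'j : j' ≠ j := by
    rintro rfl
    have := p.2
    have := p'.2
    rcases Int.mul_eq_neg_one_iff_eq_one_or_neg_one.mp hj' with ⟨h, h'⟩ | ⟨h, h'⟩ <;>
      rcases hs with rfl | rfl <;> simp_all
  obtain ⟨l, rfl⟩ := Fin.exists_succAbove_eq hj'j
  exact ⟨l, hj'⟩

theorem CoversOrthants.minor (hM : CoversOrthants M) (j : Fin (k + 1)) (hs : s = 1 ∨ s = -1) :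
    CoversOrthants (minor M j s) := by
  intro ε hε
  have hsε : IsSignVector (j.insertNth (-s) ε) := by
    refine (Fin.forall_iff_succAbove j).mpr ⟨?_, fun l => ?_⟩
    · rcases hs with rfl | rfl <;> simp
    · simpa using hε l
  obtain ⟨i, hi⟩ := hM _ hsε
  have hij : M i j ≠ s := by
    have := hi j
    rcases hs with rfl | rfl <;> simp at this <;> omega
  exact ⟨⟨i, hij⟩, fun l => by simpa using hi (j.succAbove l)⟩

theorem separative_one {M : ρ → Fin 1 → ℤ} (hS : RowsSeparated M) (hC : CoversOrthants M) :
    Separative 1 M := by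
  by_cases hzero : ∀ i, M i 0 = 0
  · exact .inl hzero
  push Not at hzero
  obtain ⟨i₀, hi₀⟩ := hzero
  obtain ⟨i₁, hi₁⟩ := hC (fun _ => 1) fun _ => .inl rfl
  obtain ⟨i₂, hi₂⟩ := hC (fun _ => -1) fun _ => .inr rfl
  -- `M i₀ 0 ≠ 0` cannot agree with both `M i₁ 0 ∈ {0, 1}` and `M i₂ 0 ∈ {0, -1}`.
  have : M i₀ ≠ M i₁ ∨ M i₀ ≠ M i₂ := by
    by_contra! h
    have h₁ := congrFun h.1 0
    have h₂ := congrFun h.2 0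
    rcases hi₁ 0 with h₁' | h₁' <;> rcases hi₂ 0 with h₂' | h₂' <;> simp_all
  obtain ⟨i', hi'⟩ : ∃ i', M i₀ ≠ M i' := this.elim (⟨_, ·⟩) (⟨_, ·⟩)
  obtain ⟨j, hj⟩ := hS i₀ i' hi'
  exact .inr ⟨i₀, i', Fin.fin_one_eq_zero j ▸ hj⟩

theorem separative_of_rowsSeparated_of_coversOrthants :
    ∀ {k : ℕ} {ρ : Type} {M : ρ → Fin k → ℤ},
      RowsSeparated M → CoversOrthants M → Separative k M
  | 0, _, _, _, _ => trivial
  | 1, _, _, hS, hC => separative_one hS hC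
  | _ + 2, _, _, hS, hC => fun j =>
    ⟨separative_of_rowsSeparated_of_coversOrthants (hS.minor j (.inr rfl)) (hC.minor j (.inr rfl)),
      separative_of_rowsSeparated_of_coversOrthants (hS.minor j (.inl rfl)) (hC.minor j (.inl rfl))⟩

end SeparativeMatrices

section Boxes

variable {ι : Type*}

theorem mem_interior_Icc_iff [Finite ι] {a b y : ι → ℝ} :
    y ∈ interior (Icc a b) ↔ ∀ j, a j < y j ∧ y j < b j := by
  rw [← pi_univ_Icc, interior_pi_set finite_univ]
  simp [interior_Icc]

theorem eq_of_Icc_section_subset_hyperplane [DecidableEq ι] {a b : ι → ℝ} (hab : ∀ i, a i < b i)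
    {j j' : ι} {c d : ℝ} (hc : c ∈ Icc (a j) (b j))
    (h : {y ∈ Icc a b | y j = c} ⊆ {y | y j' = d}) : j' = j ∧ c = d := by
  have hmem : ∀ z : ι → ℝ, z ∈ Icc a b → update z j c ∈ {y ∈ Icc a b | y j = c} := by
    intro z hz
    refine ⟨⟨fun i => ?_, fun i => ?_⟩, by simp⟩ <;> rcases eq_or_ne i j with rfl | hi <;>
      simp [*, hc.1, hc.2, hz.1 i, hz.2 i]
  have hd : ∀ z ∈ Icc a b, update z j c j' = d := fun z hz => h (hmem z hz)
  by_cases hj : j' = j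
  · subst hj
    simpa using hd a ⟨le_rfl, fun i => (hab i).le⟩
  · have ha := hd a ⟨le_rfl, fun i => (hab i).le⟩
    have hb := hd b ⟨fun i => (hab i).le, le_rfl⟩
    simp only [update_of_ne hj] at ha hb
    exact absurd (ha.trans hb.symm) (hab j').ne

theorem IsFaceOf.eq_of_Icc_section_subset [DecidableEq ι] {A B a b : ι → ℝ} {G : Set (ι → ℝ)}
    (hG : IsFaceOf G (Icc A B)) (hab : ∀ i, a i < b i) {j : ι} {c : ℝ}
    (hc : c ∈ Icc (a j) (b j)) (h : {y ∈ Icc a b | y j = c} ⊆ G) : c = A j ∨ c = B j := by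
  obtain ⟨j', A', B', hA'B', hR, hG⟩ := hG
  obtain ⟨rfl, rfl⟩ := (Icc_eq_Icc_iff fun i => (hA'B' i).le).mp hR.symm
  rcases hG with rfl | rfl
  · obtain ⟨rfl, rfl⟩ := eq_of_Icc_section_subset_hyperplane hab hc (h.trans fun _ hy => hy.2)
    exact .inl rfl
  · obtain ⟨rfl, rfl⟩ := eq_of_Icc_section_subset_hyperplane hab hc (h.trans fun _ hy => hy.2)
    exact .inr rfl

theorem endpoint_eq_of_faces {A B a b x : ι → ℝ} (hab : ∀ i, a i < b i)
    (hfaces : ∀ F, IsFaceOf F (Icc a b) → x ∈ F ∨ ∃ G, IsFaceOf G (Icc A B) ∧ F ⊆ G)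
    {j : ι} {c : ℝ} (hc : c = a j ∨ c = b j) : c = x j ∨ c = A j ∨ c = B j := by
  classical
  have hface : IsFaceOf {y ∈ Icc a b | y j = c} (Icc a b) := by
    refine ⟨j, a, b, hab, rfl, ?_⟩
    rcases hc with rfl | rfl
    exacts [.inl rfl, .inr rfl]
  rcases hfaces _ hface with hxF | ⟨G, hG, hFG⟩
  · exact .inl hxF.2.symm
  · have hcab : c ∈ Icc (a j) (b j) := by
      rcases hc with rfl | rfl
      exacts [⟨le_rfl, (hab j).le⟩, ⟨(hab j).le, le_rfl⟩]
    exact .inr (hG.eq_of_Icc_section_subset hab hcab hFG)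

def cornerBox (A B x : ι → ℝ) (v : ι → ℤ) : Set (ι → ℝ) :=
  Icc (fun j => if v j = 1 then x j else A j) (fun j => if v j = -1 then x j else B j)

variable {Q : Set (ι → ℝ)} {x : ι → ℝ} {v : ι → ℤ}

theorem IsBIS.apply_mem (hv : IsBIS Q x v) (j : ι) : v j = 0 ∨ v j = 1 ∨ v j = -1 := by
  obtain ⟨a, b, -, -, -, hv⟩ := hv
  rw [hv j]
  split_ifs <;> simp

theorem IsBIS.unique {w : ι → ℤ} (hv : IsBIS Q x v) (hw : IsBIS Q x w) : v = w := by
  obtain ⟨a, b, hab, rfl, -, hv⟩ := hv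
  obtain ⟨a', b', -, hQ, -, hw⟩ := hw
  obtain ⟨rfl, rfl⟩ := (Icc_eq_Icc_iff fun i => (hab i).le).mp hQ
  exact funext fun j => (hv j).trans (hw j).symm

theorem IsBIS.eq_cornerBox {A B : ι → ℝ} (hxAB : ∀ j, A j < x j ∧ x j < B j)
    (hv : IsBIS Q x v)
    (hfaces : ∀ F, IsFaceOf F Q → x ∈ F ∨ ∃ G, IsFaceOf G (Icc A B) ∧ F ⊆ G) :
    Q = cornerBox A B x v := by
  obtain ⟨a, b, hab, rfl, hx, hv⟩ := hv
  have hshape : ∀ j, (a j = x j ∧ b j = B j) ∨ (a j = A j ∧ b j = x j) ∨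
      (a j = A j ∧ b j = B j) := by
    intro j
    have := hab j; have := hx.1 j; have := hx.2 j; have := hxAB j
    rcases endpoint_eq_of_faces hab hfaces (.inl rfl) with ha | ha | ha <;>
      rcases endpoint_eq_of_faces hab hfaces (.inr rfl) with hb | hb | hb
    all_goals first
      | exact .inl ⟨ha, hb⟩ | exact .inr (.inl ⟨ha, hb⟩) | exact .inr (.inr ⟨ha, hb⟩)
      | (exfalso; linarith)
  unfold cornerBox
  congr 1 <;> funext j <;> have := hxAB j <;>
    rcases hshape j with ⟨ha, hb⟩ | ⟨ha, hb⟩ | ⟨ha, hb⟩ <;>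
    simp [hv j, ha, hb, this.1.ne', this.2.ne]

noncomputable def orthantPoint (A B x : ι → ℝ) (ε : ι → ℤ) : ι → ℝ :=
  fun j => if ε j = 1 then (x j + B j) / 2 else (A j + x j) / 2

variable {A B : ι → ℝ} {ε : ι → ℤ}

theorem orthantPoint_mem_interior_cornerBox [Finite ι] (hxAB : ∀ j, A j < x j ∧ x j < B j)
    (hε : IsSignVector ε) (hvε : ConformsTo v ε) :
    orthantPoint A B x ε ∈ interior (cornerBox A B x v) := by
  refine mem_interior_Icc_iff.mpr fun j => ?_
  have := hxAB j
  rcases hε j with h | h <;> rcases hvε j with h' | h' <;>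
    simp only [orthantPoint, h, h'] <;> norm_num <;> constructor <;> linarith

theorem orthantPoint_mem_Icc [Finite ι] (hxAB : ∀ j, A j < x j ∧ x j < B j)
    (hε : IsSignVector ε) : orthantPoint A B x ε ∈ Icc A B := by
  simpa [cornerBox] using
    interior_subset (orthantPoint_mem_interior_cornerBox hxAB hε (v := 0) fun _ => .inl rfl)

theorem conformsTo_of_orthantPoint_mem_cornerBox (hxAB : ∀ j, A j < x j ∧ x j < B j)
    (hε : IsSignVector ε) (hv : ∀ j, v j = 0 ∨ v j = 1 ∨ v j = -1)
    (hmem : orthantPoint A B x ε ∈ cornerBox A B x v) : ConformsTo v ε := by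
  intro j
  have := hxAB j
  have := hmem.1 j
  have := hmem.2 j
  rcases hε j with h | h <;> rcases hv j with h' | h' | h' <;>
    simp only [orthantPoint, h, h'] at * <;> norm_num at * <;> linarith

end Boxes

/-- any principal matrix of `x` with respect to a locally regulated partition of `R`
about `x` is separative. -/
theorem stmt2 (n : ℕ) (R : Set (Fin n → ℝ)) (x : Fin n → ℝ) (P : Set (Set (Fin n → ℝ)))
    (hR : IsRect R) (hx : x ∈ interior R)
    (hpart : IsLocRegPartition R P) (hab : IsAbout R P x) :
    ∀ (m : ℕ) (M : Fin m → Fin n → ℤ), IsPrincipalMatrix P x M → Separative n M := by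
  obtain ⟨A, B, -, rfl⟩ := hR
  have hxAB := mem_interior_Icc_iff.mp hx
  obtain ⟨⟨-, -, hcover⟩, hdisj⟩ := hpart
  rintro m M ⟨e, -, he, hsurj, hbis⟩
  have hbox i : e i = cornerBox A B x (M i) := (hbis i).eq_cornerBox hxAB (hab _ (he i))
  refine separative_of_rowsSeparated_of_coversOrthants (fun i i' hne => ?_) fun ε hε => ?_
  · by_contra! hsep
    obtain ⟨ε, hε, hi, hi'⟩ :=
      exists_isSignVector_conformsTo (hbis i).apply_mem (hbis i').apply_mem hsep
    have hee : e i = e i' := by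
      by_contra hee
      refine (hdisj _ (he i) _ (he i') hee).subset (?_ : orthantPoint A B x ε ∈ _)
      rw [hbox, hbox]
      exact ⟨orthantPoint_mem_interior_cornerBox hxAB hε hi,
        orthantPoint_mem_interior_cornerBox hxAB hε hi'⟩
    exact hne ((hbis i).unique (hee ▸ hbis i'))
  · obtain ⟨Q, hQ, hyQ⟩ : orthantPoint A B x ε ∈ ⋃₀ P := hcover ▸ orthantPoint_mem_Icc hxAB hε
    obtain ⟨i, rfl⟩ := hsurj Q hQ
    exact ⟨i, conformsTo_of_orthantPoint_mem_cornerBox hxAB hε (hbis i).apply_mem (hbox i ▸ hyQ)⟩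
end

section
/- Let 𝒫 be a regulated partition of ℝⁿ and let x ∈ ℝⁿ. Then ν_𝒫(x) ≥ β_𝒫(x) + 1, i.e., the number of members of 𝒫 containing x is at least one more than the number of standard unit vectors e_j such that x lies on a face with normal vector e_j of some member of 𝒫. -/
/-!
Near `x`, a regulated partition looks like a partition of the cube `{±1}ⁿ` into subcubes: the
perturbed points `x + δ ε`, `ε ∈ {±1}ⁿ`, with `δ` smaller than the gaps of the grid `D`, avoid all
faces, and `x + δ ε` lies in a box `Q ∋ x` exactly when `ε` agrees with the coordinates in which
`x` sits on a face of `Q`. So each box through `x` gives a subcube, the coordinates fixed by some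
subcube are the boundary vectors of `x`, and it remains to show that a partition of the cube into
`N` subcubes fixing `k` coordinates in total has `k + 1 ≤ N`. For this pick a coordinate `j` fixed
by the fewest subcubes and restrict to the facet `ε j = -1`: it is partitioned by the subcubes
with `σ j ≠ 1`, which still fix every other coordinate, and at least one subcube (`σ j = 1`) is
lost.
-/

open Finset

namespace Subcube

variable {ι : Type*}

/-- The sign vector `σ` encodes the subcube of `{±1}^ι` whose coordinates `j` with `σ j ≠ 0` are
fixed to `σ j`; a vertex of the cube is a sign vector `ε` without zero entries. -/
def InSubcube (σ ε : ι → SignType) : Prop := ∀ j, σ j ≠ 0 → ε j = σ j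

def IsSubcubePartition (S : Finset (ι → SignType)) : Prop :=
  ∀ ε : ι → SignType, (∀ j, ε j ≠ 0) → ∃! σ, σ ∈ S ∧ InSubcube σ ε

def vertexOf (σ : ι → SignType) : ι → SignType := fun j => if σ j = 0 then 1 else σ j

lemma vertexOf_ne_zero (σ : ι → SignType) (j : ι) : vertexOf σ j ≠ 0 := by
  unfold vertexOf; split_ifs with h <;> simp [h]

lemma inSubcube_vertexOf (σ : ι → SignType) : InSubcube σ (vertexOf σ) := fun j hj => by
  simp [vertexOf, hj]

lemma inSubcube_update_neg_one_iff [DecidableEq ι] {σ ε : ι → SignType} {j : ι} (h : σ j ≠ 1) :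
    InSubcube σ (Function.update ε j (-1)) ↔ InSubcube (Function.update σ j 0) ε := by
  refine forall_congr' fun k => ?_
  rcases eq_or_ne k j with rfl | hk
  · simp only [Function.update_self, ne_eq, not_true_eq_false, false_imp_iff, iff_true]
    revert h
    generalize σ k = t
    decide +revert
  · simp [hk]

lemma injOn_of_existsUnique {α : Type*} {A : Set α} {f : α → ι → SignType}
    (h : ∀ ε : ι → SignType, (∀ j, ε j ≠ 0) → ∃! q, q ∈ A ∧ InSubcube (f q) ε) : A.InjOn f :=
  fun q₁ h₁ _ h₂ he => (h _ (vertexOf_ne_zero (f q₁))).unique ⟨h₁, inSubcube_vertexOf _⟩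
    ⟨h₂, he ▸ inSubcube_vertexOf _⟩

lemma isSubcubePartition_image {α : Type*} {A : Set α} {f : α → ι → SignType}
    (h : ∀ ε : ι → SignType, (∀ j, ε j ≠ 0) → ∃! q, q ∈ A ∧ InSubcube (f q) ε)
    (hfin : (f '' A).Finite) : IsSubcubePartition hfin.toFinset := by
  intro ε hε
  obtain ⟨q, ⟨hq, hqε⟩, huniq⟩ := h ε hε
  refine ⟨f q, ⟨by simpa using ⟨q, hq, rfl⟩, hqε⟩, ?_⟩
  rintro σ ⟨hσ, hσε⟩
  obtain ⟨q', hq', rfl⟩ := by simpa using hσ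
  rw [huniq q' ⟨hq', hσε⟩]

namespace IsSubcubePartition

variable {S : Finset (ι → SignType)}

lemma eq_of_inSubcube (hS : IsSubcubePartition S) {σ₁ σ₂ ε : ι → SignType} (h₁ : σ₁ ∈ S)
    (h₂ : σ₂ ∈ S) (hε : ∀ j, ε j ≠ 0) (e₁ : InSubcube σ₁ ε) (e₂ : InSubcube σ₂ ε) : σ₁ = σ₂ :=
  (hS ε hε).unique ⟨h₁, e₁⟩ ⟨h₂, e₂⟩

lemma exists_neg (hS : IsSubcubePartition S) {σ : ι → SignType} (hσ : σ ∈ S) {j : ι}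
    (hj : σ j ≠ 0) : ∃ σ' ∈ S, σ' j = -σ j := by
  classical
  set ε := Function.update (vertexOf σ) j (-σ j)
  have hε : ∀ k, ε k ≠ 0 := by
    intro k
    rcases eq_or_ne k j with rfl | hk
    · simpa [ε] using hj
    · simpa [ε, hk] using vertexOf_ne_zero σ k
  obtain ⟨σ', ⟨hσ', hσ'ε⟩, -⟩ := hS ε hε
  refine ⟨σ', hσ', ?_⟩
  by_contra hne
  -- `σ'` is free in coordinate `j`, so it also contains the vertex of `σ`
  have hj' : σ' j = 0 := by
    by_contra h0
    exact hne (by simpa [ε] using (hσ'ε j h0).symm)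
  have hσ'σ : InSubcube σ' (vertexOf σ) := by
    intro k hk
    have hkj : k ≠ j := by rintro rfl; exact hk hj'
    simpa [ε, hkj] using hσ'ε k hk
  have := hS.eq_of_inSubcube hσ hσ' (vertexOf_ne_zero σ) (inSubcube_vertexOf σ) hσ'σ
  exact hj (this ▸ hj')

end IsSubcubePartition

variable [Fintype ι]

def fixedCoords (S : Finset (ι → SignType)) : Finset ι := {j | ∃ σ ∈ S, σ j ≠ 0}

namespace IsSubcubePartition

variable {S : Finset (ι → SignType)}

lemma exists_eq (hS : IsSubcubePartition S) {j : ι} (hj : j ∈ fixedCoords S) {s : SignType}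
    (hs : s ≠ 0) : ∃ σ ∈ S, σ j = s := by
  obtain ⟨σ, hσ, hσj⟩ := by simpa [fixedCoords] using hj
  by_cases h : σ j = s
  · exact ⟨σ, hσ, h⟩
  obtain ⟨σ', hσ', hσ'j⟩ := hS.exists_neg hσ hσj
  refine ⟨σ', hσ', ?_⟩
  rw [hσ'j]
  revert h hσj hs
  generalize σ j = t
  decide +revert

lemma exists_pivot (hS : IsSubcubePartition S) (hne : (fixedCoords S).Nonempty) :
    ∃ j ∈ fixedCoords S, ∀ k ∈ fixedCoords S, ∃ σ ∈ S, σ k ≠ 0 ∧ σ j ≠ 1 := by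
  have hmin := exists_min_image (fixedCoords S) (fun j => #{σ ∈ S | σ j ≠ 0}) hne
  obtain ⟨j, hj, hmin⟩ := hmin
  refine ⟨j, hj, fun k hk => ?_⟩
  -- otherwise the subcubes fixing `k` are among those with `σ j = 1`, fewer than those fixing `j`
  by_contra! hkj
  obtain ⟨τ, hτ, hτj⟩ := hS.exists_eq hj (s := -1) (by decide)
  have hsub : {σ ∈ S | σ k ≠ 0} ⊂ {σ ∈ S | σ j ≠ 0} := by
    refine (ssubset_iff_of_subset fun σ hσ => ?_).2 ⟨τ, ?_, fun hτk => ?_⟩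
    · simp only [mem_filter] at hσ ⊢
      simp [hσ.1, hkj σ hσ.1 hσ.2]
    · simp [hτ, hτj]
    · simp only [mem_filter] at hτk
      simp [hkj τ hτ hτk.2] at hτj
  exact (card_lt_card hsub).not_ge (hmin k hk)

end IsSubcubePartition

variable [DecidableEq ι]

/-- The partition of the facet `ε j = -1` induced by `S`, lifted back to the whole cube. -/
def negFacet (S : Finset (ι → SignType)) (j : ι) : Finset (ι → SignType) :=
  {σ ∈ S | σ j ≠ 1}.image (Function.update · j 0)

namespace IsSubcubePartition

variable {S : Finset (ι → SignType)}

lemma negFacet (hS : IsSubcubePartition S) (j : ι) : IsSubcubePartition (negFacet S j) := by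
  intro ε hε
  have hε' : ∀ k, Function.update ε j (-1) k ≠ 0 := by
    intro k
    rcases eq_or_ne k j with rfl | hk
    · simp
    · simpa [hk] using hε k
  obtain ⟨σ, ⟨hσ, hσε⟩, huniq⟩ := hS _ hε'
  have hσj : σ j ≠ 1 := fun h => by simpa [h] using hσε j
  refine ⟨Function.update σ j 0, ⟨mem_image_of_mem _ (mem_filter.2 ⟨hσ, hσj⟩),
    (inSubcube_update_neg_one_iff hσj).1 hσε⟩, ?_⟩
  rintro _ ⟨hτ, hτε⟩
  obtain ⟨τ, hτS, rfl⟩ := mem_image.1 hτ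
  rw [mem_filter] at hτS
  rw [huniq τ ⟨hτS.1, (inSubcube_update_neg_one_iff hτS.2).2 hτε⟩]

lemma card_negFacet (hS : IsSubcubePartition S) (j : ι) :
    #(Subcube.negFacet S j) = #{σ ∈ S | σ j ≠ 1} := by
  refine card_image_of_injOn fun σ₁ h₁ σ₂ h₂ he => ?_
  simp only [coe_filter, Set.mem_ofPred_eq] at h₁ h₂
  set ε := Function.update (vertexOf (Function.update σ₁ j 0)) j (-1)
  have hε : ∀ k, ε k ≠ 0 := by
    intro k
    rcases eq_or_ne k j with rfl | hk
    · simp [ε]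
    · simpa [ε, hk] using vertexOf_ne_zero _ k
  have e₁ := (inSubcube_update_neg_one_iff h₁.2).2 (inSubcube_vertexOf _)
  have e₂ : InSubcube σ₂ ε :=
    (inSubcube_update_neg_one_iff h₂.2).2 (by rw [← he]; exact inSubcube_vertexOf _)
  exact hS.eq_of_inSubcube h₁.1 h₂.1 hε e₁ e₂

end IsSubcubePartition

lemma fixedCoords_negFacet {S : Finset (ι → SignType)} {j : ι}
    (hpivot : ∀ k ∈ fixedCoords S, ∃ σ ∈ S, σ k ≠ 0 ∧ σ j ≠ 1) :
    fixedCoords (negFacet S j) = (fixedCoords S).erase j := by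
  ext k
  simp only [fixedCoords, negFacet, mem_erase, mem_filter, mem_univ, true_and, mem_image,
    exists_exists_and_eq_and]
  constructor
  · rintro ⟨σ, ⟨hσ, -⟩, hσk⟩
    have hkj : k ≠ j := by rintro rfl; simp at hσk
    exact ⟨hkj, σ, hσ, by simpa [hkj] using hσk⟩
  · rintro ⟨hkj, hk⟩
    obtain ⟨σ, hσ, hσk, hσj⟩ := hpivot k (by simpa [fixedCoords] using hk)
    exact ⟨σ, ⟨hσ, hσj⟩, by simpa [hkj] using hσk⟩

theorem IsSubcubePartition.card_fixedCoords_add_one_le {S : Finset (ι → SignType)}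
    (hS : IsSubcubePartition S) : #(fixedCoords S) + 1 ≤ #S := by
  induction hm : #(fixedCoords S) generalizing S with
  | zero =>
    obtain ⟨σ, ⟨hσ, -⟩, -⟩ := hS (fun _ => 1) (fun _ => one_ne_zero)
    simpa using card_pos.2 ⟨σ, hσ⟩
  | succ m ih =>
    obtain ⟨j, hj, hpivot⟩ := hS.exists_pivot (card_pos.1 (by omega))
    have hfacet : #(fixedCoords (Subcube.negFacet S j)) = m := by
      rw [fixedCoords_negFacet hpivot, card_erase_of_mem hj, hm, Nat.add_sub_cancel]
    have hsplit : #{σ ∈ S | σ j ≠ 1} < #S := by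
      obtain ⟨σ, hσ, hσj⟩ := hS.exists_eq hj one_ne_zero
      exact card_lt_card (filter_ssubset.2 ⟨σ, hσ, by simp [hσj]⟩)
    have := ih (hS.negFacet j) hfacet
    rw [hS.card_negFacet] at this
    omega

end Subcube

open Set Subcube

lemma exists_pos_lt_abs_sub {D : Set ℝ} {d : ℝ} (hd : 0 < d)
    (hsep : ∀ r₁ ∈ D, ∀ r₂ ∈ D, r₁ ≠ r₂ → d < |r₁ - r₂|) (t : ℝ) :
    ∃ δ, 0 < δ ∧ ∀ r ∈ D, r ≠ t → δ < |t - r| := by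
  -- at most one point of `D` lies within `d / 2` of `t`
  by_cases h : ∃ r₀ ∈ D, r₀ ≠ t ∧ |t - r₀| < d / 2
  · obtain ⟨r₀, hr₀, hr₀t, hr₀d⟩ := h
    have hpos : 0 < |t - r₀| := abs_pos.2 (sub_ne_zero.2 hr₀t.symm)
    refine ⟨|t - r₀| / 2, by positivity, fun r hr hrt => ?_⟩
    rcases eq_or_ne r r₀ with rfl | hrr₀
    · linarith
    · have := hsep r hr r₀ hr₀ hrr₀
      have := abs_sub_le r t r₀
      rw [abs_sub_comm r t] at this
      linarith
  · push Not at h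
    exact ⟨d / 4, by positivity, fun r hr hrt => by linarith [h r hr hrt]⟩

section Perturbation

variable {r t δ : ℝ} {s : SignType}

lemma eq_or_lt_sub_or_add_lt (h : r ≠ t → δ < |t - r|) : r = t ∨ r < t - δ ∨ t + δ < r := by
  rcases eq_or_ne r t with rfl | hrt
  · exact .inl rfl
  · rcases lt_abs.1 (h hrt) with h | h
    · exact .inr (.inl (by linarith))
    · exact .inr (.inr (by linarith))

lemma add_sign_mul_ne (hs : s ≠ 0) (hδ : 0 < δ) (hr : r ≠ t → δ < |t - r|) : t + s * δ ≠ r := by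
  rcases SignType.trichotomy s with rfl | rfl | rfl
  · rcases eq_or_lt_sub_or_add_lt hr with rfl | h | h <;> simp <;> linarith
  · exact absurd rfl hs
  · rcases eq_or_lt_sub_or_add_lt hr with rfl | h | h <;> simp <;> linarith

lemma lt_add_sign_mul_iff (hs : s ≠ 0) (hδ : 0 < δ) (hr : r ≠ t → δ < |t - r|) :
    r < t + s * δ ↔ r ≤ t ∧ (t = r → s = 1) := by
  rcases SignType.trichotomy s with rfl | rfl | rfl
  · rcases eq_or_lt_sub_or_add_lt hr with rfl | h | h <;> simp <;> grind
  · exact absurd rfl hs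
  · rcases eq_or_lt_sub_or_add_lt hr with rfl | h | h <;> simp <;> grind

lemma add_sign_mul_lt_iff (hs : s ≠ 0) (hδ : 0 < δ) (hr : r ≠ t → δ < |t - r|) :
    t + s * δ < r ↔ t ≤ r ∧ (t = r → s = -1) := by
  rcases SignType.trichotomy s with rfl | rfl | rfl
  · rcases eq_or_lt_sub_or_add_lt hr with rfl | h | h <;> simp <;> grind
  · exact absurd rfl hs
  · rcases eq_or_lt_sub_or_add_lt hr with rfl | h | h <;> simp <;> grind

end Perturbation

section Box

variable {ι : Type*} {a b x δ : ι → ℝ} {ε : ι → SignType} {D : Set ℝ}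

/-- The sign vector of the face of `[a, b]` of least dimension containing `x`; a nonzero entry
points from the face into the box. -/
noncomputable def boxSign (a b x : ι → ℝ) : ι → SignType :=
  fun j => if x j = a j then 1 else if x j = b j then -1 else 0

lemma boxSign_ne_zero_iff {j : ι} : boxSign a b x j ≠ 0 ↔ x j = a j ∨ x j = b j := by
  unfold boxSign; split_ifs <;> simp_all

lemma inSubcube_boxSign_iff (hab : ∀ j, a j < b j) :
    InSubcube (boxSign a b x) ε ↔ ∀ j, (x j = a j → ε j = 1) ∧ (x j = b j → ε j = -1) := by
  refine forall_congr' fun j => ?_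
  unfold boxSign
  have := (hab j).ne
  split_ifs <;> simp_all

lemma perturb_mem_Icc_iff (hab : ∀ j, a j < b j) (hε : ∀ j, ε j ≠ 0) (hδ : ∀ j, 0 < δ j)
    (hD : ∀ j, ∀ r ∈ D, r ≠ x j → δ j < |x j - r|) (ha : ∀ j, a j ∈ D) (hb : ∀ j, b j ∈ D) :
    (fun j => x j + ε j * δ j) ∈ Icc a b ↔ x ∈ Icc a b ∧ InSubcube (boxSign a b x) ε := by
  have hlo : ∀ j, a j ≤ x j + ε j * δ j ↔ a j ≤ x j ∧ (x j = a j → ε j = 1) := fun j =>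
    (add_sign_mul_ne (hε j) (hδ j) (hD j _ (ha j))).symm.le_iff_lt.trans
      (lt_add_sign_mul_iff (hε j) (hδ j) (hD j _ (ha j)))
  have hup : ∀ j, x j + ε j * δ j ≤ b j ↔ x j ≤ b j ∧ (x j = b j → ε j = -1) := fun j =>
    (add_sign_mul_ne (hε j) (hδ j) (hD j _ (hb j))).le_iff_lt.trans
      (add_sign_mul_lt_iff (hε j) (hδ j) (hD j _ (hb j)))
  simp only [Set.mem_Icc, Pi.le_def, hlo, hup, inSubcube_boxSign_iff hab, forall_and]
  tauto

lemma perturb_mem_interior_Icc [Finite ι] (hε : ∀ j, ε j ≠ 0) (hδ : ∀ j, 0 < δ j)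
    (hD : ∀ j, ∀ r ∈ D, r ≠ x j → δ j < |x j - r|) (ha : ∀ j, a j ∈ D) (hb : ∀ j, b j ∈ D)
    (h : (fun j => x j + ε j * δ j) ∈ Icc a b) :
    (fun j => x j + ε j * δ j) ∈ interior (Icc a b) := by
  rw [← pi_univ_Icc, interior_pi_set finite_univ]
  intro j _
  simp only [interior_Icc]
  exact ⟨lt_of_le_of_ne (h.1 j) (add_sign_mul_ne (hε j) (hδ j) (hD j _ (ha j))).symm,
    lt_of_le_of_ne (h.2 j) (add_sign_mul_ne (hε j) (hδ j) (hD j _ (hb j)))⟩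

end Box

section Partition

variable {ι : Type*} {P : Set (Set (ι → ℝ))} {a b : Set (ι → ℝ) → ι → ℝ} {x : ι → ℝ}

lemma isBoundaryVector_iff (hab : ∀ Q ∈ P, ∀ j, a Q j < b Q j)
    (hQ : ∀ Q ∈ P, Q = Icc (a Q) (b Q)) {j : ι} :
    IsBoundaryVector P x j ↔ ∃ Q ∈ P, x ∈ Q ∧ boxSign (a Q) (b Q) x j ≠ 0 := by
  simp only [boxSign_ne_zero_iff]
  constructor
  · rintro ⟨Q, hQP, F, ⟨a', b', hab', hQ', hF⟩, hxF⟩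
    obtain ⟨rfl, rfl⟩ := (Icc_eq_Icc_iff fun i => (hab' i).le).1 (hQ'.symm.trans (hQ Q hQP))
    rcases hF with rfl | rfl
    · exact ⟨Q, hQP, hxF.1, .inl hxF.2⟩
    · exact ⟨Q, hQP, hxF.1, .inr hxF.2⟩
  · rintro ⟨Q, hQP, hxQ, h | h⟩
    · exact ⟨Q, hQP, _, ⟨a Q, b Q, hab Q hQP, hQ Q hQP, .inl rfl⟩, hxQ, h⟩
    · exact ⟨Q, hQP, _, ⟨a Q, b Q, hab Q hQP, hQ Q hQP, .inr rfl⟩, hxQ, h⟩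

theorem existsUnique_inSubcube_boxSign [Finite ι] {D : Set ℝ}
    (hcorner : ∀ Q ∈ P, ∀ j, a Q j ∈ D ∧ b Q j ∈ D ∧ a Q j < b Q j)
    (hQ : ∀ Q ∈ P, Q = Icc (a Q) (b Q)) (hcover : ∀ y, ∃ Q ∈ P, y ∈ Q)
    (hdisj : ∀ Q₁ ∈ P, ∀ Q₂ ∈ P, Q₁ ≠ Q₂ → interior Q₁ ∩ interior Q₂ = ∅)
    {δ : ι → ℝ} (hδ : ∀ j, 0 < δ j) (hD : ∀ j, ∀ r ∈ D, r ≠ x j → δ j < |x j - r|)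
    {ε : ι → SignType} (hε : ∀ j, ε j ≠ 0) :
    ∃! Q, Q ∈ {Q | Q ∈ P ∧ x ∈ Q} ∧ InSubcube (boxSign (a Q) (b Q) x) ε := by
  set y : ι → ℝ := fun j => x j + ε j * δ j
  have hmem : ∀ Q ∈ P, y ∈ Q ↔ x ∈ Q ∧ InSubcube (boxSign (a Q) (b Q) x) ε := fun Q hQP => by
    have h := perturb_mem_Icc_iff (fun j => (hcorner Q hQP j).2.2) hε hδ hD
      (fun j => (hcorner Q hQP j).1) (fun j => (hcorner Q hQP j).2.1)
    rwa [← hQ Q hQP] at h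
  have hint : ∀ Q ∈ P, y ∈ Q → y ∈ interior Q := fun Q hQP hyQ => by
    rw [hQ Q hQP] at hyQ ⊢
    exact perturb_mem_interior_Icc hε hδ hD (fun j => (hcorner Q hQP j).1)
      (fun j => (hcorner Q hQP j).2.1) hyQ
  obtain ⟨Q, hQP, hyQ⟩ := hcover y
  obtain ⟨hxQ, hQε⟩ := (hmem Q hQP).1 hyQ
  refine ⟨Q, ⟨⟨hQP, hxQ⟩, hQε⟩, ?_⟩
  rintro Q' ⟨⟨hQ'P, hxQ'⟩, hQ'ε⟩
  by_contra hne
  have hyQ' := (hmem Q' hQ'P).2 ⟨hxQ', hQ'ε⟩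
  exact (hdisj Q' hQ'P Q hQP hne).subset ⟨hint Q' hQ'P hyQ', hint Q hQP hyQ⟩

end Partition

/-- for any regulated partition `P` of `ℝⁿ` and any `x ∈ ℝⁿ`,
`ν_P(x) ≥ β_P(x) + 1`. -/
theorem stmt3 (n : ℕ) (P : Set (Set (Fin n → ℝ))) (hP : IsRegPartition P) (x : Fin n → ℝ) :
    betaP P x + 1 ≤ nuP P x := by
  obtain ⟨⟨D, d, hd, hsep, hbox⟩, hcover, hdisj⟩ := hP
  choose! a b hcorner hQ using hbox
  choose δ hδ hD using fun j => exists_pos_lt_abs_sub hd hsep (x j)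
  have hunique := fun (ε : Fin n → SignType) (hε : ∀ j, ε j ≠ 0) =>
    existsUnique_inSubcube_boxSign (x := x) hcorner hQ hcover hdisj hδ hD hε
  have hfin := toFinite ((fun Q => boxSign (a Q) (b Q) x) '' {Q | Q ∈ P ∧ x ∈ Q})
  have hbeta : {j | IsBoundaryVector P x j} = fixedCoords hfin.toFinset := by
    ext j
    simp [isBoundaryVector_iff (fun Q hQP j => (hcorner Q hQP j).2.2) hQ, fixedCoords, and_assoc]
  calc betaP P x + 1 = #(fixedCoords hfin.toFinset) + 1 := by rw [betaP, hbeta, ncard_coe_finset]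
    _ ≤ #hfin.toFinset := (isSubcubePartition_image hunique hfin).card_fixedCoords_add_one_le
    _ = nuP P x := by
      rw [nuP, ← (injOn_of_existsUnique hunique).ncard_image, ncard_eq_toFinset_card _ hfin]
end

section
/- Let R be an n-dimensional rectangle in ℝⁿ, let x ∈ Int(R), and let 𝒫 be a locally regulated partition of R about x. For any nonempty set V of boundary vectors of x with respect to 𝒫, let 𝒫_V be the set of all P ∈ 𝒫 such that some v ∈ V is a boundary vector of x with respect to P (i.e., x lies on a face of P with normal vector v). Then |𝒫_V| ≥ |V| + 1. -/
/-!
Because `𝒫` is about `x`, every member of `𝒫` is an orthant box at `x`: in each coordinate it spans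
`[x_j, b_j]`, `[a_j, x_j]` or `[a_j, b_j]`, recorded by a sign pattern `σ ∈ {1, -1, 0}ⁿ`, and
`x` lies on a face of it with normal `e_j` exactly when `σ_j ≠ 0`. Choosing one sample point in
each open orthant around `x`, the partition of `R` induces a partition of the cube `{±1}ⁿ` into
the subcubes `{s | ∀ j, σ_j = 0 ∨ σ_j = s_j}`. Since `∑ₛ ∏_{j ∈ J} s_j = 0` for `J ≠ ∅`, and
on a subcube this sum is its size times `∏_{j ∈ J} σ_j`, the function `1` and the functions
`Q ↦ σ_Q j` for `j ∈ V` are pairwise orthogonal on `𝒫_V` for the inner product weighted by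
subcube sizes. They are nonzero, hence linearly independent, so `|𝒫_V| ≥ |V| + 1`.
-/

open Finset

@[simp]
lemma SignType.cast_real_eq_zero {s : SignType} : (s : ℝ) = 0 ↔ s = 0 := by
  cases s <;> simp

theorem card_le_card_of_weighted_orthogonal {α β : Type*} [Fintype β] (T : Finset α)
    (w : α → ℝ) (hw : ∀ a ∈ T, 0 < w a) (u : β → α → ℝ) (hu : ∀ i, ∃ a ∈ T, u i a ≠ 0)
    (horth : Pairwise fun i j => ∑ a ∈ T, w a * u i a * u j a = 0) :
    Fintype.card β ≤ #T := by
  let v : β → EuclideanSpace ℝ T := fun i => WithLp.toLp 2 fun a => √(w a) * u i a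
  have hv : LinearIndependent ℝ v := by
    refine linearIndependent_of_ne_zero_of_inner_eq_zero (fun i hi => ?_) (fun i j hij => ?_)
    · obtain ⟨a, ha, hua⟩ := hu i
      have := congrArg (fun y : EuclideanSpace ℝ T => y ⟨a, ha⟩) hi
      simp [v, (Real.sqrt_pos.2 (hw a ha)).ne', hua] at this
    · simp only [v, PiLp.inner_apply, RCLike.inner_apply, conj_trivial]
      rw [← horth hij, ← T.sum_coe_sort]
      refine Fintype.sum_congr _ _ fun a => ?_
      have := Real.mul_self_sqrt (hw a a.2).le
      linear_combination (u i a * u j a) * this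
  simpa using hv.fintype_card_le_finrank

section Subcube

variable {ι : Type*} [Fintype ι] [DecidableEq ι]

def subcube (t : ι → SignType) : Finset (ι → ℤˣ) :=
  {s | ∀ i, t i = 0 ∨ (t i : ℤ) = s i}

lemma subcube_nonempty (t : ι → SignType) : (subcube t).Nonempty := by
  refine ⟨fun i => if t i = -1 then -1 else 1, mem_filter.2 ⟨mem_univ _, fun i => ?_⟩⟩
  rcases ht : t i with _ | _ | _ <;> simp [ht]

lemma subcube_zero : subcube (0 : ι → SignType) = univ := by
  ext; simp [subcube]

lemma sum_prod_subcube (t : ι → SignType) (J : Finset ι) :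
    ∑ s ∈ subcube t, ∏ j ∈ J, (s j : ℝ) = #(subcube t) * ∏ j ∈ J, (t j : ℝ) := by
  by_cases hJ : ∃ j ∈ J, t j = 0
  · obtain ⟨j, hjJ, htj⟩ := hJ
    rw [prod_eq_zero hjJ (by simp [htj]), mul_zero]
    -- flipping the free coordinate `j` is a fixed-point-free involution of the subcube
    -- that negates the summand
    refine sum_involution (fun s _ => Function.update s j (-s j)) (fun s _ => ?_)
      (fun s _ _ h => ?_) (fun s hs => ?_) (fun s _ => by simp)
    · have hrest : ∏ i ∈ J.erase j, ((Function.update s j (-s j) i : ℤˣ) : ℝ) =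
          ∏ i ∈ J.erase j, (s i : ℝ) :=
        prod_congr rfl fun i hi => by rw [Function.update_of_ne (ne_of_mem_erase hi)]
      rw [← mul_prod_erase J _ hjJ, ← mul_prod_erase J _ hjJ, hrest]
      simp
    · simpa using congrFun h j
    · simp only [subcube, mem_filter, mem_univ, true_and] at hs ⊢
      intro i
      rcases eq_or_ne i j with rfl | hij
      · exact .inl htj
      · simpa [hij] using hs i
  · push Not at hJ
    rw [← nsmul_eq_mul, ← sum_const]
    refine sum_congr rfl fun s hs => prod_congr rfl fun j hj => ?_
    simp only [subcube, mem_filter] at hs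
    rw [← SignType.intCast_cast, (hs.2 j).resolve_left (hJ j hj)]

lemma sum_prod_cube {J : Finset ι} (hJ : J.Nonempty) :
    ∑ s : ι → ℤˣ, ∏ j ∈ J, (s j : ℝ) = 0 := by
  obtain ⟨j, hj⟩ := hJ
  rw [← subcube_zero, sum_prod_subcube, prod_eq_zero hj (by simp), mul_zero]

lemma sum_card_mul_prod_of_subcube_partition {α : Type*} {S : Finset α} {t : α → ι → SignType}
    (hS : ∀ s, ∃! a, a ∈ S ∧ s ∈ subcube (t a)) {J : Finset ι} (hJ : J.Nonempty) :
    ∑ a ∈ S, #(subcube (t a)) * ∏ j ∈ J, (t a j : ℝ) = 0 := by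
  have hdisj : (S : Set α).PairwiseDisjoint fun a => subcube (t a) := fun a ha b hb hab =>
    disjoint_left.2 fun s hsa hsb => hab ((hS s).unique ⟨ha, hsa⟩ ⟨hb, hsb⟩)
  have hcover : S.biUnion (fun a => subcube (t a)) = univ :=
    eq_univ_of_forall fun s => mem_biUnion.2 (hS s).exists
  simp_rw [← sum_prod_subcube]
  rw [← sum_biUnion hdisj, hcover, sum_prod_cube hJ]

theorem card_add_one_le_card_filter_of_subcube_partition {α : Type*} {S : Finset α}
    {t : α → ι → SignType} (hS : ∀ s, ∃! a, a ∈ S ∧ s ∈ subcube (t a)) {V : Finset ι}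
    (hV : V.Nonempty) (hVt : ∀ j ∈ V, ∃ a ∈ S, t a j ≠ 0) :
    #V + 1 ≤ #{a ∈ S | ∃ j ∈ V, t a j ≠ 0} := by
  set T := {a ∈ S | ∃ j ∈ V, t a j ≠ 0}
  have horth : ∀ J ⊆ V, J.Nonempty →
      ∑ a ∈ T, #(subcube (t a)) * ∏ j ∈ J, (t a j : ℝ) = 0 := by
    intro J hJV hJ
    rw [sum_filter_of_ne fun a _ h => ?_, sum_card_mul_prod_of_subcube_partition hS hJ]
    obtain ⟨j, hj⟩ := hJ
    exact ⟨j, hJV hj, by simpa using prod_ne_zero_iff.1 (right_ne_zero_of_mul h) j hj⟩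
  let u : Option V → α → ℝ := fun o a => o.elim 1 fun j => t a j
  have hu : ∀ o, ∃ a ∈ T, u o a ≠ 0 := by
    rintro (_ | ⟨j, hj⟩)
    · obtain ⟨j, hj⟩ := hV
      obtain ⟨a, ha, htj⟩ := hVt j hj
      exact ⟨a, mem_filter.2 ⟨ha, j, hj, htj⟩, one_ne_zero⟩
    · obtain ⟨a, ha, htj⟩ := hVt j hj
      exact ⟨a, mem_filter.2 ⟨ha, j, hj, htj⟩, by simpa [u] using htj⟩
  have huu : Pairwise fun o o' => ∑ a ∈ T, (#(subcube (t a)) : ℝ) * u o a * u o' a = 0 := by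
    rintro (_ | ⟨j, hj⟩) (_ | ⟨k, hk⟩) hne
    · exact absurd rfl hne
    · simpa [u] using horth {k} (by simpa) (singleton_nonempty k)
    · simpa [u] using horth {j} (by simpa) (singleton_nonempty j)
    · have hjk : j ≠ k := fun h => hne (by subst h; rfl)
      simpa [u, prod_pair hjk, mul_assoc] using horth {j, k} (by simp [insert_subset_iff, hj, hk])
        (insert_nonempty j {k})
  simpa using card_le_card_of_weighted_orthogonal T _
    (fun a _ => by exact_mod_cast (subcube_nonempty (t a)).card_pos) u hu huu

end Subcube

section Geometry

open Set

variable {ι : Type*} {a b c d x : ι → ℝ}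

theorem interior_Icc_pi [Finite ι] (a b : ι → ℝ) :
    interior (Icc a b) = Set.pi univ fun i => Ioo (a i) (b i) := by
  rw [← pi_univ_Icc, interior_pi_set finite_univ]
  simp only [interior_Icc]

theorem exists_isFaceWithNormal_mem_iff (hcd : ∀ i, c i < d i) (j : ι) (y : ι → ℝ) :
    (∃ F, IsFaceWithNormal F (Icc c d) j ∧ y ∈ F) ↔ y ∈ Icc c d ∧ (y j = c j ∨ y j = d j) := by
  constructor
  · rintro ⟨F, ⟨c', d', hcd', hQ, hF | hF⟩, hy⟩ <;>
      obtain ⟨rfl, rfl⟩ := (Icc_eq_Icc_iff fun i => (hcd i).le).1 hQ <;> subst hF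
    exacts [⟨hy.1, .inl hy.2⟩, ⟨hy.1, .inr hy.2⟩]
  · rintro ⟨hy, hyj | hyj⟩
    exacts [⟨_, ⟨c, d, hcd, rfl, .inl rfl⟩, hy, hyj⟩, ⟨_, ⟨c, d, hcd, rfl, .inr rfl⟩, hy, hyj⟩]

theorem update_mem_Icc [DecidableEq ι] {y : ι → ℝ} (hy : y ∈ Icc c d) {j : ι} {v : ℝ}
    (hv : v ∈ Icc (c j) (d j)) : Function.update y j v ∈ Icc c d := by
  rw [← pi_univ_Icc] at hy ⊢
  exact (update_mem_pi_iff_of_mem hy).2 fun _ => hv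

theorem eq_of_face_subset_hyperplane [DecidableEq ι] (hcd : ∀ i, c i < d i) {j k : ι} {v e : ℝ}
    (hv : v ∈ Icc (c j) (d j)) (h : {y ∈ Icc c d | y j = v} ⊆ {y | y k = e}) :
    k = j ∧ v = e := by
  have hp : Function.update c j v ∈ {y ∈ Icc c d | y j = v} :=
    ⟨update_mem_Icc (left_mem_Icc.2 fun i => (hcd i).le) hv, by simp⟩
  by_cases hkj : k = j
  · subst hkj
    exact ⟨rfl, by simpa using h hp⟩
  -- moving the point across the box in direction `k` stays in the face but leaves the hyperplane
  have hq : Function.update (Function.update c j v) k (d k) ∈ {y ∈ Icc c d | y j = v} :=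
    ⟨update_mem_Icc hp.1 (right_mem_Icc.2 (hcd k).le), by simp [Ne.symm hkj]⟩
  have h1 : c k = e := by simpa [hkj] using h hp
  have h2 : d k = e := by simpa using h hq
  exact absurd (h1.trans h2.symm) (hcd k).ne

theorem eq_or_eq_of_face_subset_isFaceOf [DecidableEq ι] (hab : a ≤ b) (hcd : ∀ i, c i < d i)
    {j : ι} {v : ℝ} (hv : v ∈ Icc (c j) (d j)) {G : Set (ι → ℝ)} (hG : IsFaceOf G (Icc a b))
    (h : {y ∈ Icc c d | y j = v} ⊆ G) : v = a j ∨ v = b j := by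
  obtain ⟨k, a', b', -, hR, hG | hG⟩ := hG <;>
    obtain ⟨rfl, rfl⟩ := (Icc_eq_Icc_iff hab).1 hR <;> subst hG <;>
    obtain ⟨rfl, rfl⟩ := eq_of_face_subset_hyperplane hcd hv (h.trans fun y hy => hy.2)
  exacts [Or.inl rfl, Or.inr rfl]

def orthantLower (a x : ι → ℝ) (σ : ι → SignType) : ι → ℝ :=
  fun j => if σ j = 1 then x j else a j

def orthantUpper (x b : ι → ℝ) (σ : ι → SignType) : ι → ℝ :=
  fun j => if σ j = -1 then x j else b j

def orthantBox (a b x : ι → ℝ) (σ : ι → SignType) : Set (ι → ℝ) :=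
  Icc (orthantLower a x σ) (orthantUpper x b σ)

noncomputable def orthantSample (a b x : ι → ℝ) (s : ι → ℤˣ) : ι → ℝ :=
  fun j => if s j = 1 then (x j + b j) / 2 else (a j + x j) / 2

theorem orthantBox_zero : orthantBox a b x 0 = Icc a b :=
  rfl

section Coordinate
variable {j : ι} (hx : a j < x j ∧ x j < b j) (σ : ι → SignType) (s : ι → ℤˣ)
include hx

theorem orthantLower_lt_orthantUpper : orthantLower a x σ j < orthantUpper x b σ j := by
  rcases hσ : σ j with _ | _ | _ <;> simp [orthantLower, orthantUpper, hσ] <;> linarith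

theorem orthantSample_mem_Ioo (h : σ j = 0 ∨ (σ j : ℤ) = s j) :
    orthantSample a b x s j ∈ Ioo (orthantLower a x σ j) (orthantUpper x b σ j) := by
  rcases Int.units_eq_one_or (s j) with hs | hs <;> rcases hσ : σ j with _ | _ | _ <;>
    simp_all [orthantLower, orthantUpper, orthantSample] <;> constructor <;> linarith

theorem sign_eq_zero_or_eq_of_orthantSample_mem_Icc
    (h : orthantSample a b x s j ∈ Icc (orthantLower a x σ j) (orthantUpper x b σ j)) :
    σ j = 0 ∨ (σ j : ℤ) = s j := by
  rcases Int.units_eq_one_or (s j) with hs | hs <;> rcases hσ : σ j with _ | _ | _ <;>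
    simp_all [orthantLower, orthantUpper, orthantSample] <;> linarith [h.1, h.2]

theorem self_mem_Icc_orthantLower_orthantUpper :
    x j ∈ Icc (orthantLower a x σ j) (orthantUpper x b σ j) := by
  rcases hσ : σ j with _ | _ | _ <;> simp [orthantLower, orthantUpper, hσ] <;> (try constructor) <;>
    linarith

theorem eq_orthantLower_or_eq_orthantUpper_iff :
    x j = orthantLower a x σ j ∨ x j = orthantUpper x b σ j ↔ σ j ≠ 0 := by
  rcases hσ : σ j with _ | _ | _ <;> simp [orthantLower, orthantUpper, hσ, hx.1.ne', hx.2.ne]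

end Coordinate

theorem exists_eq_orthantBox [DecidableEq ι] (hcd : ∀ i, c i < d i) (hsub : Icc c d ⊆ Icc a b)
    (habout : ∀ F, IsFaceOf F (Icc c d) → x ∈ F ∨ ∃ G, IsFaceOf G (Icc a b) ∧ F ⊆ G) :
    ∃ σ, Icc c d = orthantBox a b x σ := by
  obtain ⟨hac, hdb⟩ := (Set.Icc_subset_Icc_iff fun i => (hcd i).le).1 hsub
  have hend : ∀ j v, (v = c j ∨ v = d j) → v = x j ∨ v = a j ∨ v = b j := by
    intro j v hv
    have hvI : v ∈ Icc (c j) (d j) := by rcases hv with rfl | rfl <;> simp [(hcd j).le]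
    rcases habout {y ∈ Icc c d | y j = v}
        ⟨j, c, d, hcd, rfl, by rcases hv with rfl | rfl <;> simp⟩ with hxF | ⟨G, hG, hFG⟩
    · exact .inl hxF.2.symm
    · exact .inr (eq_or_eq_of_face_subset_isFaceOf
        (hac.trans (fun i => (hcd i).le) |>.trans hdb) hcd hvI hG hFG)
  have hcoord : ∀ j, ∃ τ : SignType,
      c j = (if τ = 1 then x j else a j) ∧ d j = (if τ = -1 then x j else b j) := by
    intro j
    rcases hend j _ (.inl rfl) with hc | hc | hc <;> rcases hend j _ (.inr rfl) with hd | hd | hd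
    all_goals first
      | (exfalso; linarith [hcd j, hac j, hdb j])
      | (use 1; simp [hc, hd]; done) | (use -1; simp [hc, hd]; done) | (use 0; simp [hc, hd])
  choose τ hτ using hcoord
  exact ⟨τ, congr_arg₂ Set.Icc (funext fun j => (hτ j).1) (funext fun j => (hτ j).2)⟩

variable (hx : ∀ j, a j < x j ∧ x j < b j)
include hx

theorem self_mem_orthantBox (σ : ι → SignType) : x ∈ orthantBox a b x σ := by
  rw [orthantBox, ← pi_univ_Icc]
  exact fun j _ => self_mem_Icc_orthantLower_orthantUpper (hx j) σ

theorem exists_isFaceWithNormal_orthantBox_iff (σ : ι → SignType) (j : ι) :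
    (∃ F, IsFaceWithNormal F (orthantBox a b x σ) j ∧ x ∈ F) ↔ σ j ≠ 0 := by
  rw [orthantBox, exists_isFaceWithNormal_mem_iff fun i => orthantLower_lt_orthantUpper (hx i) σ,
    eq_orthantLower_or_eq_orthantUpper_iff (hx j)]
  exact and_iff_right (self_mem_orthantBox hx σ)

theorem orthantSample_mem_orthantBox_iff [Fintype ι] [DecidableEq ι] (σ : ι → SignType)
    (s : ι → ℤˣ) :
    orthantSample a b x s ∈ orthantBox a b x σ ↔ s ∈ subcube σ := by
  rw [orthantBox, ← pi_univ_Icc]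
  simp only [mem_pi, mem_univ, forall_const, subcube, Finset.mem_filter, Finset.mem_univ, true_and]
  exact forall_congr' fun j => ⟨sign_eq_zero_or_eq_of_orthantSample_mem_Icc (hx j) σ s,
    fun h => Ioo_subset_Icc_self (orthantSample_mem_Ioo (hx j) σ s h)⟩

theorem orthantSample_mem_interior_orthantBox [Fintype ι] [DecidableEq ι] (σ : ι → SignType)
    {s : ι → ℤˣ} (hs : s ∈ subcube σ) : orthantSample a b x s ∈ interior (orthantBox a b x σ) := by
  rw [orthantBox, interior_Icc_pi]
  exact fun j _ => orthantSample_mem_Ioo (hx j) σ s ((Finset.mem_filter.1 hs).2 j)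

theorem existsUnique_mem_subcube_of_partition [Fintype ι] [DecidableEq ι]
    {P : Set (Set (ι → ℝ))} (hcover : ⋃₀ P = Icc a b)
    (hdisj : ∀ Q₁ ∈ P, ∀ Q₂ ∈ P, Q₁ ≠ Q₂ → interior Q₁ ∩ interior Q₂ = ∅)
    {σ : Set (ι → ℝ) → ι → SignType} (hσ : ∀ Q ∈ P, Q = orthantBox a b x (σ Q))
    (s : ι → ℤˣ) : ∃! Q, Q ∈ P ∧ s ∈ subcube (σ Q) := by
  have hsR : orthantSample a b x s ∈ ⋃₀ P := by
    rw [hcover, ← orthantBox_zero, orthantSample_mem_orthantBox_iff hx _, subcube_zero]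
    exact Finset.mem_univ s
  obtain ⟨Q, hQ, hsQ⟩ := hsR
  rw [hσ Q hQ, orthantSample_mem_orthantBox_iff hx _] at hsQ
  refine ⟨Q, ⟨hQ, hsQ⟩, fun Q' ⟨hQ', hsQ'⟩ => by_contra fun hne => ?_⟩
  have h1 := orthantSample_mem_interior_orthantBox hx _ hsQ'
  have h2 := orthantSample_mem_interior_orthantBox hx _ hsQ
  rw [← hσ Q' hQ'] at h1
  rw [← hσ Q hQ] at h2
  exact (hdisj Q' hQ' Q hQ hne).subset ⟨h1, h2⟩

end Geometry

/-- if `P` is a locally regulated partition of `R` about `x` and `V` is a nonempty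
set of boundary vectors of `x` with respect to `P`, then the set `P_V` of members of `P` having a
face through `x` with normal vector in `V` has at least `|V| + 1` elements. -/
theorem stmt4 (n : ℕ) (R : Set (Fin n → ℝ)) (x : Fin n → ℝ) (P : Set (Set (Fin n → ℝ)))
    (hR : IsRect R) (hx : x ∈ interior R)
    (hpart : IsLocRegPartition R P) (hab : IsAbout R P x)
    (V : Set (Fin n)) (hV : V.Nonempty) (hbd : ∀ j ∈ V, IsBoundaryVector P x j) :
    V.ncard + 1 ≤
      Set.ncard {Q | Q ∈ P ∧ ∃ j ∈ V, ∃ F, IsFaceWithNormal F Q j ∧ x ∈ F} := by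
  obtain ⟨⟨hPfin, hrect, hcover⟩, hdisj⟩ := hpart
  obtain ⟨a, b, -, rfl⟩ := hR
  have hx' : ∀ j, a j < x j ∧ x j < b j := by simpa [interior_Icc_pi] using hx
  have hbox : ∀ Q ∈ P, ∃ σ, Q = orthantBox a b x σ := by
    intro Q hQ
    obtain ⟨c, d, hcd, rfl⟩ := hrect Q hQ
    exact exists_eq_orthantBox hcd (hcover ▸ Set.subset_sUnion_of_mem hQ) (hab _ hQ)
  choose! σ hσ using hbox
  have hface : ∀ Q ∈ P, ∀ j, (∃ F, IsFaceWithNormal F Q j ∧ x ∈ F) ↔ σ Q j ≠ 0 :=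
    fun Q hQ j => by
      have := exists_isFaceWithNormal_orthantBox_iff hx' (σ Q) j
      rwa [← hσ Q hQ] at this
  have key := card_add_one_le_card_filter_of_subcube_partition (S := hPfin.toFinset) (t := σ)
    (fun s => by simpa using existsUnique_mem_subcube_of_partition hx' hcover hdisj hσ s)
    (V := V.toFinite.toFinset) (by simpa using hV) fun j hj => by
      obtain ⟨Q, hQ, hxQ⟩ := hbd j (by simpa using hj)
      exact ⟨Q, by simpa using hQ, (hface Q hQ j).1 hxQ⟩
  rw [Set.ncard_eq_toFinset_card V V.toFinite]
  refine key.trans_eq ?_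
  rw [← Set.ncard_coe_finset]
  congr 1
  ext Q
  simp only [Finset.coe_filter, Set.Finite.mem_toFinset]
  exact and_congr_right fun hQ => exists_congr fun j => and_congr_right fun _ => (hface Q hQ j).symm
end
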